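/- arXiv:2107.13894 — 6 statements merged into one kernel-verified Lean document; each statement's English description precedes it below -/
import Mathlib

section
/- Let m ≤ N, let A be an m×m real symmetric positive semidefinite matrix, and let P be an N×m real matrix. Then for every j ∈ {1, …, m}, λ_j(P A Pᵀ) ≥ λ_min(Pᵀ P) · λ_j(A), and for every j with m < j ≤ N, λ_j(P A Pᵀ) = 0. -/
/-!
Both parts come from the Courant–Fischer characterisation: `λ_j(M) ≥ c` as soon as the quadratic
form of `M` is at least `c |x|²` on some `(j+1)`-dimensional subspace, and `λ_j(M) ≤ c` as soon as
it is at most `c |x|²` on some subspace of codimension `≤ j`.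

If `c := λ_min(PᵀP) > 0`, then `G := PᵀP` is invertible and `L := P G⁻¹` is a right inverse of `Pᵀ`.
For `y = L v` one has `yᵀ (P A Pᵀ) y = vᵀ A v` and `|y|² = vᵀ G⁻¹ v ≤ |v|² / c`, so `L` carries the
span of the top `j + 1` eigenvectors of `A` to a `(j+1)`-dimensional subspace on which the quadratic
form of `P A Pᵀ` is at least `c λ_j(A) |y|²`.  For `j ≥ m`, the quadratic form of `P A Pᵀ` vanishes
on `ker Pᵀ`, of codimension `≤ m`, so `λ_j(P A Pᵀ) ≤ 0`.
-/

open Matrix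
open scoped Classical

/-- The `j`-th largest eigenvalue (with `j` zero-based, so `j = 0` gives the largest and
`j = n - 1` the smallest eigenvalue) of a real square matrix, where the eigenvalues are counted
with multiplicity and ordered decreasingly; junk value `0` if the matrix is not symmetric
(Hermitian). -/
noncomputable def eigDesc {n : ℕ} (A : Matrix (Fin n) (Fin n) ℝ) (j : Fin n) : ℝ :=
  if hA : A.IsHermitian then hA.eigenvalues (Tuple.sort hA.eigenvalues j.rev) else 0

namespace Module.Basis

variable {ι K V : Type*} [Field K] [AddCommGroup V] [Module K V] [Fintype ι]

theorem exists_mem_ne_zero_forall_repr_eq_zero (b : Basis ι K V) (W : Submodule K V)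
    (s : Finset ι) (hs : s.card < Module.finrank K W) :
    ∃ x ∈ W, x ≠ 0 ∧ ∀ i ∈ s, b.repr x i = 0 := by
  have : FiniteDimensional K V := b.finiteDimensional_of_finite
  let f : W →ₗ[K] (s → K) := LinearMap.pi fun i => b.coord i ∘ₗ W.subtype
  have hf : LinearMap.ker f ≠ ⊥ :=
    LinearMap.ker_ne_bot_of_finrank_lt (by simpa using hs)
  obtain ⟨⟨x, hxW⟩, hx, hx0⟩ := (Submodule.ne_bot_iff _).mp hf
  refine ⟨x, hxW, by simpa using hx0, fun i hi => ?_⟩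
  simpa [f] using congrFun hx ⟨i, hi⟩

end Module.Basis

theorem OrthonormalBasis.norm_sq_eq_sum_norm_sq_repr {ι 𝕜 E : Type*} [Fintype ι] [RCLike 𝕜]
    [NormedAddCommGroup E] [InnerProductSpace 𝕜 E] (b : OrthonormalBasis ι 𝕜 E) (x : E) :
    ‖x‖ ^ 2 = ∑ i, ‖b.repr x i‖ ^ 2 := by
  rw [← b.repr.norm_map, EuclideanSpace.norm_sq_eq]

namespace LinearMap.IsSymmetric

open RCLike

variable {𝕜 E : Type*} [RCLike 𝕜] [NormedAddCommGroup E] [InnerProductSpace 𝕜 E]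
  [FiniteDimensional 𝕜 E] {T : E →ₗ[𝕜] E} (hT : T.IsSymmetric) {n : ℕ} (hn : Module.finrank 𝕜 E = n)

theorem re_inner_apply_eq_sum (x : E) :
    re (inner 𝕜 x (T x)) =
      ∑ i, hT.eigenvalues hn i * ‖(hT.eigenvectorBasis hn).repr x i‖ ^ 2 := by
  rw [← (hT.eigenvectorBasis hn).repr.inner_map_map, PiLp.inner_apply, map_sum]
  refine Finset.sum_congr rfl fun i _ => ?_
  rw [hT.eigenvectorBasis_apply_self_apply, ← smul_eq_mul, inner_smul_right,
    inner_self_eq_norm_sq_to_K]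
  norm_cast

theorem mul_norm_sq_le_re_inner {x : E} {c : ℝ}
    (hc : ∀ i, (hT.eigenvectorBasis hn).repr x i ≠ 0 → c ≤ hT.eigenvalues hn i) :
    c * ‖x‖ ^ 2 ≤ re (inner 𝕜 x (T x)) := by
  rw [hT.re_inner_apply_eq_sum hn, (hT.eigenvectorBasis hn).norm_sq_eq_sum_norm_sq_repr,
    Finset.mul_sum]
  refine Finset.sum_le_sum fun i _ => ?_
  by_cases hi : (hT.eigenvectorBasis hn).repr x i = 0
  · simp [hi]
  · exact mul_le_mul_of_nonneg_right (hc i hi) (sq_nonneg _)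

theorem re_inner_le_mul_norm_sq {x : E} {c : ℝ}
    (hc : ∀ i, (hT.eigenvectorBasis hn).repr x i ≠ 0 → hT.eigenvalues hn i ≤ c) :
    re (inner 𝕜 x (T x)) ≤ c * ‖x‖ ^ 2 := by
  rw [hT.re_inner_apply_eq_sum hn, (hT.eigenvectorBasis hn).norm_sq_eq_sum_norm_sq_repr,
    Finset.mul_sum]
  refine Finset.sum_le_sum fun i _ => ?_
  by_cases hi : (hT.eigenvectorBasis hn).repr x i = 0
  · simp [hi]
  · exact mul_le_mul_of_nonneg_right (hc i hi) (sq_nonneg _)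

theorem le_eigenvalues_of_forall_mul_norm_sq_le {V : Submodule 𝕜 E} {j : Fin n}
    (hV : j < Module.finrank 𝕜 V) {c : ℝ} (hc : ∀ x ∈ V, c * ‖x‖ ^ 2 ≤ re (inner 𝕜 x (T x))) :
    c ≤ hT.eigenvalues hn j := by
  obtain ⟨x, hxV, hx0, hx⟩ :=
    (hT.eigenvectorBasis hn).toBasis.exists_mem_ne_zero_forall_repr_eq_zero V (Finset.Iio j)
      (by rwa [Fin.card_Iio])
  have hle : re (inner 𝕜 x (T x)) ≤ hT.eigenvalues hn j * ‖x‖ ^ 2 := by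
    refine hT.re_inner_le_mul_norm_sq hn fun i hi => hT.eigenvalues_antitone hn ?_
    by_contra! hij
    exact hi (by simpa using hx i (Finset.mem_Iio.mpr hij))
  exact le_of_mul_le_mul_right ((hc x hxV).trans hle) (by positivity)

theorem eigenvalues_le_of_forall_le_mul_norm_sq {U : Submodule 𝕜 E} {j : Fin n}
    (hU : n ≤ j + Module.finrank 𝕜 U) {c : ℝ}
    (hc : ∀ x ∈ U, re (inner 𝕜 x (T x)) ≤ c * ‖x‖ ^ 2) :
    hT.eigenvalues hn j ≤ c := by
  obtain ⟨x, hxU, hx0, hx⟩ :=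
    (hT.eigenvectorBasis hn).toBasis.exists_mem_ne_zero_forall_repr_eq_zero U (Finset.Ioi j)
      (by rw [Fin.card_Ioi]; omega)
  have hle : hT.eigenvalues hn j * ‖x‖ ^ 2 ≤ re (inner 𝕜 x (T x)) := by
    refine hT.mul_norm_sq_le_re_inner hn fun i hi => hT.eigenvalues_antitone hn ?_
    by_contra! hij
    exact hi (by simpa using hx i (Finset.mem_Ioi.mpr hij))
  exact le_of_mul_le_mul_right (hle.trans (hc x hxU)) (by positivity)

theorem exists_finrank_eq_forall_eigenvalues_mul_norm_sq_le (j : Fin n) :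
    ∃ V : Submodule 𝕜 E, Module.finrank 𝕜 V = j + 1 ∧
      ∀ x ∈ V, hT.eigenvalues hn j * ‖x‖ ^ 2 ≤ re (inner 𝕜 x (T x)) := by
  set b := (hT.eigenvectorBasis hn).toBasis
  refine ⟨Submodule.span 𝕜 (b '' Set.Iic j), ?_, fun x hx => ?_⟩
  · have := finrank_span_eq_card (b.linearIndependent.comp ((↑) : Set.Iic j → Fin n)
      Subtype.val_injective)
    rwa [Set.range_comp, Subtype.range_coe, ← Set.toFinset_card, Set.toFinset_Iic,
      Fin.card_Iic] at this
  · refine hT.mul_norm_sq_le_re_inner hn fun i hi => hT.eigenvalues_antitone hn ?_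
    have := (b.mem_span_image.mp hx) (by simpa [b] using hi)
    simpa using this

end LinearMap.IsSymmetric

theorem EuclideanSpace.real_norm_sq_eq_dotProduct {ι : Type*} [Fintype ι]
    (x : EuclideanSpace ℝ ι) : ‖x‖ ^ 2 = x.ofLp ⬝ᵥ x.ofLp := by
  rw [← real_inner_self_eq_norm_sq, EuclideanSpace.inner_eq_star_dotProduct, star_trivial]

theorem Matrix.inner_toEuclideanLin_apply {ι : Type*} [Fintype ι] [DecidableEq ι]
    (M : Matrix ι ι ℝ) (x : EuclideanSpace ℝ ι) :
    inner ℝ x (toEuclideanLin M x) = x.ofLp ⬝ᵥ M *ᵥ x.ofLp := by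
  rw [EuclideanSpace.inner_eq_star_dotProduct, star_trivial, toLpLin_apply,
    dotProduct_comm]

section eigDesc

variable {n : ℕ} {M : Matrix (Fin n) (Fin n) ℝ}

theorem eigDesc_eq_eigenvalues (hM : M.IsHermitian) (j : Fin n) :
    eigDesc M j =
      (isSymmetric_toEuclideanLin_iff.mpr hM).eigenvalues finrank_euclideanSpace_fin j := by
  set hT := isSymmetric_toEuclideanLin_iff.mpr hM
  set μ := hT.eigenvalues finrank_euclideanSpace_fin
  have hcast : ∀ {k} (hk : Module.finrank ℝ (EuclideanSpace ℝ (Fin n)) = k) (h : k = n)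
      (i : Fin k), hT.eigenvalues hk i = μ (Fin.cast h i) := by
    intro k hk h i; subst h; rfl
  -- Mathlib's matrix eigenvalues are the sorted ones reindexed along an arbitrary equivalence.
  set τ :=
    (Fintype.equivOfCardEq (Fintype.card_fin _)).symm.trans (finCongr (Fintype.card_fin n))
  have hτ : hM.eigenvalues = μ ∘ τ := funext fun i => hcast _ (Fintype.card_fin n) _
  have hsort : μ ∘ (τ * Tuple.sort (μ ∘ τ)) = μ ∘ Fin.revPerm :=
    Tuple.unique_monotone (Tuple.monotone_sort (μ ∘ τ))
      ((hT.eigenvalues_antitone _).comp Fin.rev_anti)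
  rw [eigDesc, dif_pos hM, hτ]
  simpa using congrFun hsort j.rev

theorem eigDesc_nonneg (hM : M.PosSemidef) (j : Fin n) : 0 ≤ eigDesc M j := by
  rw [eigDesc, dif_pos hM.1]
  exact hM.eigenvalues_nonneg _

theorem le_eigDesc_of_forall_mul_dotProduct_le (hM : M.IsHermitian)
    {V : Submodule ℝ (Fin n → ℝ)} {j : Fin n} (hV : j < Module.finrank ℝ V) {c : ℝ}
    (hc : ∀ x ∈ V, c * (x ⬝ᵥ x) ≤ x ⬝ᵥ M *ᵥ x) : c ≤ eigDesc M j := by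
  rw [eigDesc_eq_eigenvalues hM]
  refine (isSymmetric_toEuclideanLin_iff.mpr hM).le_eigenvalues_of_forall_mul_norm_sq_le _
    (V := V.map (WithLp.linearEquiv 2 ℝ (Fin n → ℝ)).symm.toLinearMap)
    (by rwa [LinearEquiv.finrank_map_eq]) fun x hx => ?_
  rw [EuclideanSpace.real_norm_sq_eq_dotProduct, RCLike.re_to_real, inner_toEuclideanLin_apply]
  exact hc _ ((Submodule.mem_map_equiv _).mp hx)

theorem eigDesc_le_of_forall_dotProduct_le_mul (hM : M.IsHermitian)
    {U : Submodule ℝ (Fin n → ℝ)} {j : Fin n} (hU : n ≤ j + Module.finrank ℝ U) {c : ℝ}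
    (hc : ∀ x ∈ U, x ⬝ᵥ M *ᵥ x ≤ c * (x ⬝ᵥ x)) : eigDesc M j ≤ c := by
  rw [eigDesc_eq_eigenvalues hM]
  refine (isSymmetric_toEuclideanLin_iff.mpr hM).eigenvalues_le_of_forall_le_mul_norm_sq _
    (U := U.map (WithLp.linearEquiv 2 ℝ (Fin n → ℝ)).symm.toLinearMap)
    (by rwa [LinearEquiv.finrank_map_eq]) fun x hx => ?_
  rw [EuclideanSpace.real_norm_sq_eq_dotProduct, RCLike.re_to_real, inner_toEuclideanLin_apply]
  exact hc _ ((Submodule.mem_map_equiv _).mp hx)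

theorem exists_finrank_eq_forall_eigDesc_mul_dotProduct_le (hM : M.IsHermitian) (j : Fin n) :
    ∃ V : Submodule ℝ (Fin n → ℝ), Module.finrank ℝ V = j + 1 ∧
      ∀ x ∈ V, eigDesc M j * (x ⬝ᵥ x) ≤ x ⬝ᵥ M *ᵥ x := by
  obtain ⟨V, hV, hle⟩ := (isSymmetric_toEuclideanLin_iff.mpr hM)
    |>.exists_finrank_eq_forall_eigenvalues_mul_norm_sq_le finrank_euclideanSpace_fin j
  refine ⟨V.map (WithLp.linearEquiv 2 ℝ (Fin n → ℝ)).toLinearMap,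
    by rwa [LinearEquiv.finrank_map_eq], fun x hx => ?_⟩
  have := hle _ ((Submodule.mem_map_equiv _).mp hx)
  rwa [EuclideanSpace.real_norm_sq_eq_dotProduct, RCLike.re_to_real, inner_toEuclideanLin_apply,
    ← eigDesc_eq_eigenvalues hM] at this

theorem eigDesc_last_mul_dotProduct_le (hM : M.IsHermitian) (h : n - 1 < n) (x : Fin n → ℝ) :
    eigDesc M ⟨n - 1, h⟩ * (x ⬝ᵥ x) ≤ x ⬝ᵥ M *ᵥ x := by
  obtain ⟨V, hV, hle⟩ := exists_finrank_eq_forall_eigDesc_mul_dotProduct_le hM ⟨n - 1, h⟩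
  have hV : V = ⊤ := Submodule.eq_top_of_finrank_eq (by simp [hV]; omega)
  exact hle x (hV ▸ Submodule.mem_top)

end eigDesc

theorem mul_dotProduct_le_dotProduct_self_of_mul_le {ι : Type*} [Fintype ι] {u v : ι → ℝ}
    {c : ℝ} (hc : 0 ≤ c) (h : c * (u ⬝ᵥ u) ≤ u ⬝ᵥ v) : c * (u ⬝ᵥ v) ≤ v ⬝ᵥ v := by
  have hsq : 0 ≤ (v - c • u) ⬝ᵥ (v - c • u) := dotProduct_self_star_nonneg _
  simp only [sub_dotProduct, dotProduct_sub, smul_dotProduct, dotProduct_smul, smul_eq_mul,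
    dotProduct_comm v u] at hsq
  nlinarith

section conj

variable {ι κ : Type*} [Fintype ι] [Fintype κ]

theorem dotProduct_mul_mul_transpose_mulVec (P : Matrix κ ι ℝ) (A : Matrix ι ι ℝ) (y : κ → ℝ) :
    y ⬝ᵥ (P * A * Pᵀ) *ᵥ y = (Pᵀ *ᵥ y) ⬝ᵥ A *ᵥ (Pᵀ *ᵥ y) := by
  rw [← mulVec_mulVec, ← mulVec_mulVec, dotProduct_mulVec, mulVec_transpose]

theorem mulVec_dotProduct_mulVec_self (P : Matrix κ ι ℝ) (u : ι → ℝ) :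
    (P *ᵥ u) ⬝ᵥ (P *ᵥ u) = u ⬝ᵥ (Pᵀ * P) *ᵥ u := by
  rw [← mulVec_mulVec, dotProduct_mulVec u, vecMul_transpose]

theorem Matrix.PosSemidef.mul_mul_transpose_same
    {A : Matrix ι ι ℝ} (hA : A.PosSemidef) (P : Matrix κ ι ℝ) : (P * A * Pᵀ).PosSemidef := by
  simpa only [conjTranspose_eq_transpose_of_trivial] using hA.mul_mul_conjTranspose_same P

end conj

theorem Matrix.isHermitian_transpose_mul_self {ι κ : Type*} [Fintype κ] (P : Matrix κ ι ℝ) :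
    (Pᵀ * P).IsHermitian := by
  simpa only [conjTranspose_eq_transpose_of_trivial] using isHermitian_conjTranspose_mul_self P

theorem mul_eigDesc_le_eigDesc_mul_mul_transpose {m N : ℕ} (hmN : m ≤ N)
    {A : Matrix (Fin m) (Fin m) ℝ} (hA : A.PosSemidef) (P : Matrix (Fin N) (Fin m) ℝ) {c : ℝ}
    (hc : 0 < c) (hP : ∀ u, c * (u ⬝ᵥ u) ≤ u ⬝ᵥ (Pᵀ * P) *ᵥ u) (j : Fin m) :
    c * eigDesc A j ≤ eigDesc (P * A * Pᵀ) (Fin.castLE hmN j) := by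
  set G := Pᵀ * P
  have hG : IsUnit G.det := G.isUnit_iff_isUnit_det.mp <| mulVec_injective_iff_isUnit.mp <|
    (injective_iff_map_eq_zero G.mulVecLin).mpr fun u hu => by
      have hu' := hP u
      rw [← mulVecLin_apply, hu, dotProduct_zero] at hu'
      have hnonneg : 0 ≤ u ⬝ᵥ u := dotProduct_self_star_nonneg u
      exact dotProduct_self_eq_zero.mp (by nlinarith)
  set L := P * G⁻¹
  have hGL : G * G⁻¹ = 1 := mul_nonsing_inv _ hG
  have hPL : Pᵀ * L = 1 := by rw [← Matrix.mul_assoc, hGL]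
  have hL : Function.Injective L.mulVecLin := fun v w hvw => by
    simpa [mulVec_mulVec, hPL] using congrArg (Pᵀ *ᵥ ·) hvw
  obtain ⟨V, hV, hAV⟩ := exists_finrank_eq_forall_eigDesc_mul_dotProduct_le hA.1 j
  refine le_eigDesc_of_forall_mul_dotProduct_le (hA.mul_mul_transpose_same P).1
    (V := V.map L.mulVecLin) ?_ ?_
  · rw [← (Submodule.equivMapOfInjective _ hL V).finrank_eq, hV]
    simp
  · rintro _ ⟨v, hv, rfl⟩
    set u := G⁻¹ *ᵥ v
    have hGu : G *ᵥ u = v := by rw [mulVec_mulVec, hGL, one_mulVec]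
    have hLv : L *ᵥ v = P *ᵥ u := (mulVec_mulVec _ _ _).symm
    have hPLv : Pᵀ *ᵥ (L *ᵥ v) = v := by rw [mulVec_mulVec, hPL, one_mulVec]
    calc c * eigDesc A j * (L *ᵥ v ⬝ᵥ L *ᵥ v) = eigDesc A j * (c * (u ⬝ᵥ v)) := by
          rw [hLv, mulVec_dotProduct_mulVec_self, hGu]; ring
      _ ≤ eigDesc A j * (v ⬝ᵥ v) := mul_le_mul_of_nonneg_left
          (mul_dotProduct_le_dotProduct_self_of_mul_le hc.le (hGu ▸ hP u)) (eigDesc_nonneg hA j)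
      _ ≤ v ⬝ᵥ A *ᵥ v := hAV v hv
      _ = L *ᵥ v ⬝ᵥ (P * A * Pᵀ) *ᵥ (L *ᵥ v) := by
          rw [dotProduct_mul_mul_transpose_mulVec, hPLv]

theorem eigDesc_mul_mul_transpose_eq_zero {m N : ℕ} {A : Matrix (Fin m) (Fin m) ℝ}
    (hA : A.PosSemidef) (P : Matrix (Fin N) (Fin m) ℝ) (j : Fin N) (hj : m ≤ j) :
    eigDesc (P * A * Pᵀ) j = 0 := by
  refine le_antisymm ?_ (eigDesc_nonneg (hA.mul_mul_transpose_same P) j)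
  refine eigDesc_le_of_forall_dotProduct_le_mul (hA.mul_mul_transpose_same P).1
    (U := LinearMap.ker Pᵀ.mulVecLin) ?_ fun y hy => ?_
  · have hrank := (Pᵀ.mulVecLin).finrank_range_add_finrank_ker
    have hrange := (LinearMap.range Pᵀ.mulVecLin).finrank_le
    simp only [Module.finrank_fin_fun] at hrank hrange
    omega
  · rw [LinearMap.mem_ker, mulVecLin_apply] at hy
    simp [dotProduct_mul_mul_transpose_mulVec, hy]

/-- Let `m ≤ N`, let `A` be an `m × m` real symmetric positive semidefinite matrix and `P` an
`N × m` real matrix.  Then for every `j ∈ {1, …, m}` (zero-based: `j : Fin m`) one has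
`λ_j(P A Pᵀ) ≥ λ_min(Pᵀ P) · λ_j(A)`, and for every `j` with `m < j ≤ N` (zero-based:
`j : Fin N` with `m ≤ j`) one has `λ_j(P A Pᵀ) = 0`. -/
theorem eigenvalues_conjugation_bounds {m N : ℕ} (hmN : m ≤ N)
    (A : Matrix (Fin m) (Fin m) ℝ) (hA : A.PosSemidef) (P : Matrix (Fin N) (Fin m) ℝ) :
    (∀ j : Fin m,
        eigDesc (P * A * Pᵀ) (Fin.castLE hmN j) ≥
          eigDesc (Pᵀ * P) ⟨m - 1, Nat.sub_lt j.pos Nat.one_pos⟩ * eigDesc A j) ∧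
      ∀ j : Fin N, m ≤ (j : ℕ) → eigDesc (P * A * Pᵀ) j = 0 := by
  refine ⟨fun j => ?_, eigDesc_mul_mul_transpose_eq_zero hA P⟩
  set c := eigDesc (Pᵀ * P) ⟨m - 1, Nat.sub_lt j.pos Nat.one_pos⟩
  rcases le_or_gt c 0 with hc | hc
  · exact (mul_nonpos_of_nonpos_of_nonneg hc (eigDesc_nonneg hA j)).trans
      (eigDesc_nonneg (hA.mul_mul_transpose_same P) _)
  · exact mul_eigDesc_le_eigDesc_mul_mul_transpose hmN hA P hc
      (eigDesc_last_mul_dotProduct_le (isHermitian_transpose_mul_self P) _) j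
end

section
/- Let 0 < p ≤ 2, 0 < ρ < 1, c > 0, K > 0, and N ≥ 1. Let (ε_t)_{t≥1} be i.i.d. random vectors in ℝ^N, defined on a probability space (Ω, 𝓕, P), such that E|ε_{k,1}|^p ≤ K for every coordinate k ∈ {1, …, N}. Let (C*_m)_{m≥0} be N×N real matrices each of whose entries is bounded in absolute value by c ρ^m, and set u_t = Σ_{m=0}^{t−1} C*_m ε_{t−m}. Then there exists a constant c₀, depending only on N, p, ρ, c and K, such that for every T ≥ 1, E[ (λ_max(Σ_{t=1}^T u_t u_tᵀ))^{p/2} ] ≤ c₀ T, where λ_max denotes the largest eigenvalue of the symmetric positive semidefinite matrix Σ_{t=1}^T u_t u_tᵀ. -/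
open Matrix MeasureTheory ProbabilityTheory
open scoped Classical

/-- The largest eigenvalue of a real square matrix (junk value `0` if the matrix is not
symmetric/Hermitian). -/
noncomputable def lambdaMax {n : ℕ} (A : Matrix (Fin n) (Fin n) ℝ) : ℝ :=
  if hA : A.IsHermitian then ⨆ i, hA.eigenvalues i else 0

open Finset
open scoped ENNReal

/-!
Since `∑ₜ uₜ uₜᵀ` is positive semidefinite, `λ_max ≤ trace = ∑ₜ ∑ₖ u_{t,k}²`, and subadditivity
of `x ↦ x ^ (p / 2)` gives `λ_max ^ (p / 2) ≤ ∑ₜ ∑ₖ |u_{t,k}| ^ p`. Each coordinate satisfies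
`|u_{t,k}| ≤ c ∑ₘ ρ ^ m ∑ⱼ |ε_{t-m,j}|`, and the weighted Cauchy–Schwarz inequality followed by
subadditivity once more bounds `|u_{t,k}| ^ p` by a constant times
`∑ₘ (ρ ^ (p / 2)) ^ m ∑ⱼ |ε_{t-m,j}| ^ p`. Taking expectations, every `E |ε_{s,j}| ^ p` is at
most `K` by identical distribution, and the geometric series in `m` sums to a constant, leaving
one constant per `t`.
-/

namespace Real

theorem abs_rpow_eq_sq_rpow_half (x p : ℝ) : |x| ^ p = (x ^ 2) ^ (p / 2) := by
  rw [← sq_abs, ← rpow_natCast, ← rpow_mul (abs_nonneg x)]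
  ring_nf

theorem rpow_sum_le_sum_rpow {ι : Type*} (s : Finset ι) {f : ι → ℝ} (hf : ∀ i ∈ s, 0 ≤ f i)
    {q : ℝ} (hq0 : 0 < q) (hq1 : q ≤ 1) : (∑ i ∈ s, f i) ^ q ≤ ∑ i ∈ s, f i ^ q := by
  induction s using Finset.cons_induction with
  | empty => simp [zero_rpow hq0.ne']
  | cons a s ha ih =>
    have hf' : ∀ i ∈ s, 0 ≤ f i := fun i hi => hf i (mem_cons_of_mem hi)
    rw [sum_cons, sum_cons]
    calc (f a + ∑ i ∈ s, f i) ^ q ≤ f a ^ q + (∑ i ∈ s, f i) ^ q :=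
          rpow_add_le_add_rpow (hf a (mem_cons_self a s)) (sum_nonneg hf') hq0.le hq1
      _ ≤ f a ^ q + ∑ i ∈ s, f i ^ q := by grw [ih hf']

/-- Weighted Cauchy–Schwarz, `(∑ wᵢ aᵢ)² ≤ (∑ wᵢ) (∑ wᵢ aᵢ²)`, raised to the power `p / 2 ≤ 1`. -/
theorem abs_sum_mul_rpow_le {ι : Type*} (s : Finset ι) {w : ι → ℝ} (hw : ∀ i ∈ s, 0 ≤ w i)
    (a : ι → ℝ) {p : ℝ} (hp0 : 0 < p) (hp2 : p ≤ 2) :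
    |∑ i ∈ s, w i * a i| ^ p ≤ (∑ i ∈ s, w i) ^ (p / 2) * ∑ i ∈ s, w i ^ (p / 2) * |a i| ^ p := by
  have hwa : ∀ i ∈ s, 0 ≤ w i * a i ^ 2 := fun i hi => mul_nonneg (hw i hi) (sq_nonneg _)
  have hcs : (∑ i ∈ s, w i * a i) ^ 2 ≤ (∑ i ∈ s, w i) * ∑ i ∈ s, w i * a i ^ 2 :=
    sum_sq_le_sum_mul_sum_of_sq_le_mul s hw hwa fun i _ => le_of_eq (by ring)
  calc |∑ i ∈ s, w i * a i| ^ p = ((∑ i ∈ s, w i * a i) ^ 2) ^ (p / 2) :=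
        abs_rpow_eq_sq_rpow_half _ p
    _ ≤ ((∑ i ∈ s, w i) * ∑ i ∈ s, w i * a i ^ 2) ^ (p / 2) :=
        rpow_le_rpow (sq_nonneg _) hcs (by linarith)
    _ = (∑ i ∈ s, w i) ^ (p / 2) * (∑ i ∈ s, w i * a i ^ 2) ^ (p / 2) :=
        mul_rpow (sum_nonneg hw) (sum_nonneg hwa)
    _ ≤ (∑ i ∈ s, w i) ^ (p / 2) * ∑ i ∈ s, (w i * a i ^ 2) ^ (p / 2) :=
        mul_le_mul_of_nonneg_left (rpow_sum_le_sum_rpow s hwa (half_pos hp0) (by linarith))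
          (rpow_nonneg (sum_nonneg hw) _)
    _ = (∑ i ∈ s, w i) ^ (p / 2) * ∑ i ∈ s, w i ^ (p / 2) * |a i| ^ p := by
        congr 1
        refine sum_congr rfl fun i hi => ?_
        rw [mul_rpow (hw i hi) (sq_nonneg _), abs_rpow_eq_sq_rpow_half]

end Real

theorem geom_sum_le_inv_one_sub {x : ℝ} (h0 : 0 ≤ x) (h1 : x < 1) (n : ℕ) :
    ∑ i ∈ range n, x ^ i ≤ (1 - x)⁻¹ :=
  sum_le_hasSum _ (fun i _ => pow_nonneg h0 i) (hasSum_geometric_of_lt_one h0 h1)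

namespace Matrix

variable {n : ℕ}

theorem PosSemidef.lambdaMax_nonneg {A : Matrix (Fin n) (Fin n) ℝ} (hA : A.PosSemidef) :
    0 ≤ lambdaMax A := by
  rw [lambdaMax, dif_pos hA.isHermitian]
  exact Real.iSup_nonneg hA.eigenvalues_nonneg

theorem PosSemidef.lambdaMax_le_trace {A : Matrix (Fin n) (Fin n) ℝ} (hA : A.PosSemidef) :
    lambdaMax A ≤ A.trace := by
  have htrace : A.trace = ∑ i, hA.isHermitian.eigenvalues i := by
    simpa using hA.isHermitian.trace_eq_sum_eigenvalues
  rw [lambdaMax, dif_pos hA.isHermitian, htrace]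
  exact Real.iSup_le (fun i => single_le_sum (fun j _ => hA.eigenvalues_nonneg j) (mem_univ i))
    (sum_nonneg fun j _ => hA.eigenvalues_nonneg j)

theorem lambdaMax_sum_vecMulVec_self_rpow_le {ι : Type*} (s : Finset ι) (w : ι → Fin n → ℝ)
    {p : ℝ} (hp0 : 0 < p) (hp2 : p ≤ 2) :
    lambdaMax (∑ t ∈ s, vecMulVec (w t) (w t)) ^ (p / 2) ≤ ∑ t ∈ s, ∑ k, |w t k| ^ p := by
  have hpsd : (∑ t ∈ s, vecMulVec (w t) (w t)).PosSemidef :=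
    posSemidef_sum s fun t _ => by simpa using posSemidef_vecMulVec_self_star (w t)
  have htrace : (∑ t ∈ s, vecMulVec (w t) (w t)).trace = ∑ t ∈ s, ∑ k, w t k ^ 2 := by
    simp [trace_sum, trace_vecMulVec, dotProduct, sq]
  have hq0 : 0 < p / 2 := by positivity
  have hq1 : p / 2 ≤ 1 := by linarith
  calc lambdaMax (∑ t ∈ s, vecMulVec (w t) (w t)) ^ (p / 2)
      ≤ (∑ t ∈ s, ∑ k, w t k ^ 2) ^ (p / 2) := by
        rw [← htrace]
        exact Real.rpow_le_rpow hpsd.lambdaMax_nonneg hpsd.lambdaMax_le_trace hq0.le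
    _ ≤ ∑ t ∈ s, (∑ k, w t k ^ 2) ^ (p / 2) :=
        Real.rpow_sum_le_sum_rpow s (fun t _ => sum_nonneg fun k _ => sq_nonneg _) hq0 hq1
    _ ≤ ∑ t ∈ s, ∑ k, (w t k ^ 2) ^ (p / 2) := by
        gcongr with t
        exact Real.rpow_sum_le_sum_rpow _ (fun k _ => sq_nonneg _) hq0 hq1
    _ = ∑ t ∈ s, ∑ k, |w t k| ^ p := by simp only [Real.abs_rpow_eq_sq_rpow_half]

theorem abs_sum_mulVec_apply_le {ι κ κ' : Type*} [Fintype κ'] (s : Finset ι)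
    {C : ι → Matrix κ κ' ℝ} {b : ι → ℝ} (hC : ∀ m i j, |C m i j| ≤ b m) (x : ι → κ' → ℝ)
    (k : κ) : |(∑ m ∈ s, C m *ᵥ x m) k| ≤ ∑ m ∈ s, b m * ∑ j, |x m j| := by
  calc |(∑ m ∈ s, C m *ᵥ x m) k| = |∑ m ∈ s, ∑ j, C m k j * x m j| := by
        simp [mulVec, dotProduct]
    _ ≤ ∑ m ∈ s, ∑ j, |C m k j * x m j| :=
        (abs_sum_le_sum_abs _ _).trans (sum_le_sum fun m _ => abs_sum_le_sum_abs _ _)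
    _ ≤ ∑ m ∈ s, ∑ j, b m * |x m j| := by
        gcongr with m _ j
        rw [abs_mul]
        exact mul_le_mul_of_nonneg_right (hC m k j) (abs_nonneg _)
    _ = ∑ m ∈ s, b m * ∑ j, |x m j| := by simp only [mul_sum]

end Matrix

section GeometricMovingAverage

variable {N : ℕ} {C : ℕ → Matrix (Fin N) (Fin N) ℝ} {c ρ p : ℝ}

theorem abs_sum_range_mulVec_apply_rpow_le (hc : 0 ≤ c) (hρ0 : 0 ≤ ρ) (hρ1 : ρ < 1)
    (hC : ∀ m i j, |C m i j| ≤ c * ρ ^ m) (hp0 : 0 < p) (hp2 : p ≤ 2) (x : ℕ → Fin N → ℝ)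
    (t : ℕ) (k : Fin N) :
    |(∑ m ∈ range t, C m *ᵥ x m) k| ^ p ≤
      (1 - ρ)⁻¹ ^ (p / 2) * c ^ p * N ^ (p / 2) *
        ∑ m ∈ range t, (ρ ^ (p / 2)) ^ m * ∑ j, |x m j| ^ p := by
  have hrow : ∀ m, |(∑ j, |x m j|)| ^ p ≤ N ^ (p / 2) * ∑ j, |x m j| ^ p := fun m => by
    simpa using Real.abs_sum_mul_rpow_le univ (w := fun _ => 1) (fun _ _ => zero_le_one)
      (fun j => |x m j|) hp0 hp2
  have hcoord : |(∑ m ∈ range t, C m *ᵥ x m) k| ≤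
      |∑ m ∈ range t, ρ ^ m * (c * ∑ j, |x m j|)| := by
    refine (Matrix.abs_sum_mulVec_apply_le _ hC x k).trans (le_of_eq_of_le ?_ (le_abs_self _))
    exact sum_congr rfl fun m _ => by ring
  calc |(∑ m ∈ range t, C m *ᵥ x m) k| ^ p
      ≤ |∑ m ∈ range t, ρ ^ m * (c * ∑ j, |x m j|)| ^ p :=
        Real.rpow_le_rpow (abs_nonneg _) hcoord hp0.le
    _ ≤ (∑ m ∈ range t, ρ ^ m) ^ (p / 2) *
          ∑ m ∈ range t, (ρ ^ m) ^ (p / 2) * |c * (∑ j, |x m j|)| ^ p :=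
        Real.abs_sum_mul_rpow_le _ (fun m _ => pow_nonneg hρ0 m) _ hp0 hp2
    _ ≤ (1 - ρ)⁻¹ ^ (p / 2) *
          ∑ m ∈ range t, (ρ ^ (p / 2)) ^ m * (c ^ p * (N ^ (p / 2) * ∑ j, |x m j| ^ p)) := by
        gcongr with m
        · exact geom_sum_le_inv_one_sub hρ0 hρ1 t
        · rw [← Real.rpow_pow_comm hρ0]
        · rw [abs_mul, abs_of_nonneg hc, Real.mul_rpow hc (abs_nonneg _)]
          gcongr
          exact hrow m
    _ = (1 - ρ)⁻¹ ^ (p / 2) * c ^ p * N ^ (p / 2) *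
          ∑ m ∈ range t, (ρ ^ (p / 2)) ^ m * ∑ j, |x m j| ^ p := by
        rw [mul_sum, mul_sum]
        exact sum_congr rfl fun m _ => by ring

theorem lambdaMax_sum_vecMulVec_sum_mulVec_rpow_le (hc : 0 ≤ c) (hρ0 : 0 ≤ ρ) (hρ1 : ρ < 1)
    (hC : ∀ m i j, |C m i j| ≤ c * ρ ^ m) (hp0 : 0 < p) (hp2 : p ≤ 2) (e : ℕ → Fin N → ℝ)
    (s : Finset ℕ) :
    lambdaMax (∑ t ∈ s, vecMulVec (∑ m ∈ range t, C m *ᵥ e (t - m))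
        (∑ m ∈ range t, C m *ᵥ e (t - m))) ^ (p / 2) ≤
      N * ((1 - ρ)⁻¹ ^ (p / 2) * c ^ p * N ^ (p / 2)) *
        ∑ t ∈ s, ∑ m ∈ range t, (ρ ^ (p / 2)) ^ m * ∑ j, |e (t - m) j| ^ p := by
  calc _ ≤ ∑ t ∈ s, ∑ k, |(∑ m ∈ range t, C m *ᵥ e (t - m)) k| ^ p :=
        Matrix.lambdaMax_sum_vecMulVec_self_rpow_le s _ hp0 hp2
    _ ≤ ∑ t ∈ s, ∑ _k : Fin N, (1 - ρ)⁻¹ ^ (p / 2) * c ^ p * N ^ (p / 2) *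
          ∑ m ∈ range t, (ρ ^ (p / 2)) ^ m * ∑ j, |e (t - m) j| ^ p := by
        gcongr with t _ k
        exact abs_sum_range_mulVec_apply_rpow_le hc hρ0 hρ1 hC hp0 hp2 (fun m => e (t - m)) t k
    _ = _ := by simp only [sum_const, card_univ, Fintype.card_fin, nsmul_eq_mul, mul_sum, mul_assoc]

end GeometricMovingAverage

section Expectation

variable {Ω : Type*} [MeasurableSpace Ω] {μ : Measure Ω}

theorem lintegral_sum_abs_rpow_le {ι : Type*} [Fintype ι] {X : Ω → ι → ℝ} (hX : Measurable X)
    {p K : ℝ} (hK : ∀ k, ∫⁻ ω, ENNReal.ofReal (|X ω k| ^ p) ∂μ ≤ ENNReal.ofReal K) :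
    ∫⁻ ω, ENNReal.ofReal (∑ k, |X ω k| ^ p) ∂μ ≤ ENNReal.ofReal (Fintype.card ι * K) := by
  calc ∫⁻ ω, ENNReal.ofReal (∑ k, |X ω k| ^ p) ∂μ
      = ∑ k, ∫⁻ ω, ENNReal.ofReal (|X ω k| ^ p) ∂μ := by
        simp_rw [ENNReal.ofReal_sum_of_nonneg fun k _ => Real.rpow_nonneg (abs_nonneg (X _ k)) p]
        exact lintegral_finsetSum _ fun k _ => by fun_prop
    _ ≤ ∑ _k : ι, ENNReal.ofReal K := sum_le_sum fun k _ => hK k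
    _ = ENNReal.ofReal (Fintype.card ι * K) := by
        simp [ENNReal.ofReal_mul (Nat.cast_nonneg _)]

theorem lintegral_sum_geometric_lags_le {G : ℕ → Ω → ℝ} (hG0 : ∀ s ω, 0 ≤ G s ω)
    (hGm : ∀ s, Measurable (G s)) {B : ℝ≥0∞}
    (hB : ∀ s, 1 ≤ s → ∫⁻ ω, ENNReal.ofReal (G s ω) ∂μ ≤ B) {r : ℝ} (hr0 : 0 ≤ r) (hr1 : r < 1)
    (T : ℕ) :
    ∫⁻ ω, ENNReal.ofReal (∑ t ∈ Icc 1 T, ∑ m ∈ range t, r ^ m * G (t - m) ω) ∂μ ≤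
      T * (ENNReal.ofReal (1 - r)⁻¹ * B) := by
  calc ∫⁻ ω, ENNReal.ofReal (∑ t ∈ Icc 1 T, ∑ m ∈ range t, r ^ m * G (t - m) ω) ∂μ
      = ∑ t ∈ Icc 1 T, ∑ m ∈ range t,
          ENNReal.ofReal (r ^ m) * ∫⁻ ω, ENNReal.ofReal (G (t - m) ω) ∂μ := by
        simp_rw [ENNReal.ofReal_sum_of_nonneg fun t _ => sum_nonneg fun m _ =>
          mul_nonneg (pow_nonneg hr0 m) (hG0 _ _),
          ENNReal.ofReal_sum_of_nonneg fun m _ => mul_nonneg (pow_nonneg hr0 m) (hG0 _ _),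
          ENNReal.ofReal_mul (pow_nonneg hr0 _)]
        rw [lintegral_finsetSum _ fun t _ => by fun_prop]
        refine sum_congr rfl fun t _ => ?_
        rw [lintegral_finsetSum _ fun m _ => by fun_prop]
        exact sum_congr rfl fun m _ => lintegral_const_mul _ (hGm _).ennreal_ofReal
    _ ≤ ∑ t ∈ Icc 1 T, ∑ m ∈ range t, ENNReal.ofReal (r ^ m) * B := by
        gcongr with t ht m hm
        exact hB _ (by grind)
    _ ≤ ∑ _t ∈ Icc 1 T, ENNReal.ofReal (1 - r)⁻¹ * B := by
        gcongr with t
        rw [← sum_mul, ← ENNReal.ofReal_sum_of_nonneg fun m _ => pow_nonneg hr0 m]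
        gcongr
        exact geom_sum_le_inv_one_sub hr0 hr1 t
    _ = T * (ENNReal.ofReal (1 - r)⁻¹ * B) := by simp

theorem lintegral_le_of_le_mul_sum_geometric_lags {F : Ω → ℝ} {G : ℕ → Ω → ℝ}
    (hG0 : ∀ s ω, 0 ≤ G s ω) (hGm : ∀ s, Measurable (G s)) {B : ℝ}
    (hB : ∀ s, 1 ≤ s → ∫⁻ ω, ENNReal.ofReal (G s ω) ∂μ ≤ ENNReal.ofReal B) {r : ℝ} (hr0 : 0 ≤ r)
    (hr1 : r < 1) {A : ℝ} (hA : 0 ≤ A) {T : ℕ}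
    (hF : ∀ ω, F ω ≤ A * ∑ t ∈ Icc 1 T, ∑ m ∈ range t, r ^ m * G (t - m) ω) :
    ∫⁻ ω, ENNReal.ofReal (F ω) ∂μ ≤ ENNReal.ofReal (A * (1 - r)⁻¹ * B * T) := by
  have hr : 0 ≤ (1 - r)⁻¹ := inv_nonneg.mpr (by linarith)
  calc ∫⁻ ω, ENNReal.ofReal (F ω) ∂μ
      ≤ ∫⁻ ω, ENNReal.ofReal A *
          ENNReal.ofReal (∑ t ∈ Icc 1 T, ∑ m ∈ range t, r ^ m * G (t - m) ω) ∂μ :=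
        lintegral_mono fun ω => (ENNReal.ofReal_le_ofReal (hF ω)).trans_eq (ENNReal.ofReal_mul hA)
    _ ≤ ENNReal.ofReal A * (T * (ENNReal.ofReal (1 - r)⁻¹ * ENNReal.ofReal B)) := by
        rw [lintegral_const_mul' _ _ ENNReal.ofReal_ne_top]
        gcongr
        exact lintegral_sum_geometric_lags_le hG0 hGm hB hr0 hr1 T
    _ = ENNReal.ofReal (A * (1 - r)⁻¹ * B * T) := by
        rw [ENNReal.ofReal_mul' (Nat.cast_nonneg T), ENNReal.ofReal_mul (by positivity),
          ENNReal.ofReal_mul hA, ENNReal.ofReal_natCast]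
        ring

end Expectation

/-- Let `0 < p ≤ 2`, `0 < ρ < 1`, `c > 0`, `K > 0`, `N ≥ 1`.  There is a constant `c₀ > 0`
depending only on `N, p, ρ, c, K` such that: for any probability space and any i.i.d. random
vectors `(ε_t)_{t ≥ 1}` in `ℝ^N` with `E|ε_{k,1}|^p ≤ K` for every coordinate `k`, and any
`N × N` matrices `(C*_m)_{m ≥ 0}` with entries bounded by `c ρ^m`, setting
`u_t = ∑_{m=0}^{t−1} C*_m ε_{t−m}`, one has
`E[(λ_max(∑_{t=1}^T u_t u_tᵀ))^{p/2}] ≤ c₀ T` for every `T ≥ 1`. -/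
theorem lambdaMax_moment_bound (p ρ c K : ℝ) (N : ℕ)
    (hp0 : 0 < p) (hp2 : p ≤ 2) (hρ0 : 0 < ρ) (hρ1 : ρ < 1) (hc : 0 < c) (hK : 0 < K)
    (hN : 1 ≤ N) :
    ∃ c₀ : ℝ, 0 < c₀ ∧
      ∀ (Ω : Type) [MeasurableSpace Ω] (P : Measure Ω), IsProbabilityMeasure P →
        ∀ ε : ℕ → Ω → Fin N → ℝ,
          (∀ t, Measurable (ε t)) →
          iIndepFun (fun n => ε (n + 1)) P →
          (∀ s t : ℕ, IdentDistrib (ε (s + 1)) (ε (t + 1)) P P) →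
          (∀ k : Fin N, ∫⁻ ω, ENNReal.ofReal (|ε 1 ω k| ^ p) ∂P ≤ ENNReal.ofReal K) →
          ∀ Cs : ℕ → Matrix (Fin N) (Fin N) ℝ,
            (∀ m i j, |Cs m i j| ≤ c * ρ ^ m) →
            ∀ T : ℕ, 1 ≤ T →
              ∫⁻ ω, ENNReal.ofReal
                  ((lambdaMax (∑ t ∈ Finset.Icc 1 T,
                      vecMulVec (∑ m ∈ Finset.range t, (Cs m).mulVec (ε (t - m) ω))
                        (∑ m ∈ Finset.range t, (Cs m).mulVec (ε (t - m) ω)))) ^ (p / 2)) ∂P ≤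
                ENNReal.ofReal (c₀ * T) := by
  have hr : 0 < 1 - ρ ^ (p / 2) := sub_pos.mpr (Real.rpow_lt_one hρ0.le hρ1 (half_pos hp0))
  refine ⟨N * ((1 - ρ)⁻¹ ^ (p / 2) * c ^ p * N ^ (p / 2)) * (1 - ρ ^ (p / 2))⁻¹ * (N * K),
    by positivity, ?_⟩
  intro Ω _ P _ ε hε _ hid hmom Cs hCs T _
  have hmoment : ∀ s, 1 ≤ s →
      ∫⁻ ω, ENNReal.ofReal (∑ j, |ε s ω j| ^ p) ∂P ≤ ENNReal.ofReal (N * K) := by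
    intro s hs
    obtain ⟨s, rfl⟩ := Nat.exists_eq_add_of_le' hs
    have hF : Measurable fun x : Fin N → ℝ => ENNReal.ofReal (∑ j, |x j| ^ p) := by fun_prop
    simpa using ((hid s 0).comp hF).lintegral_eq.trans_le (lintegral_sum_abs_rpow_le (hε 1) hmom)
  exact lintegral_le_of_le_mul_sum_geometric_lags (fun s ω => by positivity) (fun s => by fun_prop)
    hmoment (by positivity) (by linarith) (by positivity) fun ω =>
      lambdaMax_sum_vecMulVec_sum_mulVec_rpow_le hc.le hρ0.le hρ1 hCs hp0 hp2 (ε · ω) (Icc 1 T)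
end

section
/- Let 0 < p ≤ 1, 0 < ρ < 1, c > 0, K > 0. Let (ε_t)_{t≥1} be i.i.d. real-valued random variables on a probability space (Ω, 𝓕, P) with E|ε_1|^p ≤ K. Let (c_m)_{m≥0} be real numbers with |c_m| ≤ c ρ^m, and define the cumulated process x_t = Σ_{s=1}^t ε_s and the moving average u_t = Σ_{m=0}^{t−1} c_m ε_{t−m}. Then there exists a constant c₀, depending only on p, ρ, c and K, such that for every T ≥ 1, E| Σ_{t=1}^T x_t u_t |^{p/2} ≤ c₀ T. -/
/-!
Writing `x_t u_t = ∑_m c_m ε_{t-m}² + ∑_m ∑_{s ≠ t-m} c_m ε_s ε_{t-m}` splits the sum into a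
diagonal part `D` and an off-diagonal part `O`. As `x ↦ |x|^r` is subadditive for `r ≤ 1`,
`E|D|^{p/2} ≤ ∑ |c_m|^{p/2} E|ε|^p = O(T)` by the geometric decay of `c_m`, while independence of
`ε_s` and `ε_{t-m}` gives `E|O|^p ≤ ∑ |c_m|^p (E|ε|^p)² = O(T²)`, hence
`E|O|^{p/2} ≤ (E|O|^p)^{1/2} = O(T)` by Lyapunov's inequality.
-/

open MeasureTheory ProbabilityTheory Finset
open scoped ENNReal

theorem ENNReal.ofReal_abs_rpow_eq_enorm_rpow (x : ℝ) {r : ℝ} (hr : 0 ≤ r) :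
    ENNReal.ofReal (|x| ^ r) = ‖x‖ₑ ^ r := by
  rw [Real.enorm_eq_ofReal_abs, ENNReal.ofReal_rpow_of_nonneg (abs_nonneg x) hr]

section Moments

variable {Ω E : Type*} [MeasurableSpace Ω] {μ : Measure Ω} [NormedAddCommGroup E] {r : ℝ}

theorem lintegral_enorm_add_rpow_le {f g : Ω → E} (hf : AEStronglyMeasurable f μ)
    (hr0 : 0 ≤ r) (hr1 : r ≤ 1) :
    ∫⁻ ω, ‖f ω + g ω‖ₑ ^ r ∂μ ≤ ∫⁻ ω, ‖f ω‖ₑ ^ r ∂μ + ∫⁻ ω, ‖g ω‖ₑ ^ r ∂μ := by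
  rw [← lintegral_add_left' (hf.enorm.pow_const r)]
  gcongr with ω
  calc ‖f ω + g ω‖ₑ ^ r ≤ (‖f ω‖ₑ + ‖g ω‖ₑ) ^ r := by gcongr; exact enorm_add_le _ _
    _ ≤ ‖f ω‖ₑ ^ r + ‖g ω‖ₑ ^ r := ENNReal.rpow_add_le_add_rpow _ _ hr0 hr1

theorem lintegral_enorm_sum_rpow_le {ι : Type*} (s : Finset ι) {f : ι → Ω → E}
    (hf : ∀ i ∈ s, AEStronglyMeasurable (f i) μ) (hr0 : 0 < r) (hr1 : r ≤ 1) :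
    ∫⁻ ω, ‖∑ i ∈ s, f i ω‖ₑ ^ r ∂μ ≤ ∑ i ∈ s, ∫⁻ ω, ‖f i ω‖ₑ ^ r ∂μ := by
  induction s using Finset.cons_induction with
  | empty => simp [hr0]
  | cons a s ha ih =>
    simp only [sum_cons, forall_mem_cons] at hf ⊢
    exact (lintegral_enorm_add_rpow_le hf.1 hr0.le hr1).trans (add_le_add le_rfl (ih hf.2))

theorem lintegral_enorm_rpow_le_of_exponent_le [IsProbabilityMeasure μ] {f : Ω → E} {s : ℝ}
    (hf : AEStronglyMeasurable f μ) (hr : 0 < r) (hrs : r ≤ s) :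
    ∫⁻ ω, ‖f ω‖ₑ ^ r ∂μ ≤ (∫⁻ ω, ‖f ω‖ₑ ^ s ∂μ) ^ (r / s) := by
  have h := ENNReal.rpow_le_rpow (eLpNorm'_le_eLpNorm'_of_exponent_le hr hrs μ hf) hr.le
  rwa [eLpNorm'_eq_lintegral_enorm, eLpNorm'_eq_lintegral_enorm, ← ENNReal.rpow_mul,
    ← ENNReal.rpow_mul, one_div_mul_cancel hr.ne', ENNReal.rpow_one, one_div_mul_eq_div] at h

end Moments

theorem ProbabilityTheory.IndepFun.lintegral_enorm_mul_rpow {Ω : Type*} [MeasurableSpace Ω]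
    {μ : Measure Ω} {X Y : Ω → ℝ} (hXY : IndepFun X Y μ) (hX : AEMeasurable X μ)
    (hY : AEMeasurable Y μ) {r : ℝ} (hr : 0 ≤ r) :
    ∫⁻ ω, ‖X ω * Y ω‖ₑ ^ r ∂μ = (∫⁻ ω, ‖X ω‖ₑ ^ r ∂μ) * ∫⁻ ω, ‖Y ω‖ₑ ^ r ∂μ := by
  have hφ : Measurable fun x : ℝ => ‖x‖ₑ ^ r := by fun_prop
  simp_rw [enorm_mul, ENNReal.mul_rpow_of_nonneg _ _ hr]
  exact lintegral_mul_eq_lintegral_mul_lintegral_of_indepFun'' (hφ.comp_aemeasurable hX)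
    (hφ.comp_aemeasurable hY) (hXY.comp hφ hφ)

theorem ProbabilityTheory.IdentDistrib.lintegral_enorm_rpow_eq {Ω Ω' E : Type*}
    [MeasurableSpace Ω] [MeasurableSpace Ω'] [NormedAddCommGroup E] [MeasurableSpace E]
    [OpensMeasurableSpace E] {μ : Measure Ω} {ν : Measure Ω'} {X : Ω → E} {Y : Ω' → E}
    (h : IdentDistrib X Y μ ν) (r : ℝ) :
    ∫⁻ ω, ‖X ω‖ₑ ^ r ∂μ = ∫⁻ ω, ‖Y ω‖ₑ ^ r ∂ν :=
  (h.comp (by fun_prop : Measurable fun x : E => ‖x‖ₑ ^ r)).lintegral_eq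

theorem ProbabilityTheory.iIndepFun.indepFun_of_one_le {Ω β : Type*} [MeasurableSpace Ω]
    [MeasurableSpace β] {μ : Measure Ω} {X : ℕ → Ω → β} (h : iIndepFun (fun n => X (n + 1)) μ)
    {s t : ℕ} (hs : 1 ≤ s) (ht : 1 ≤ t) (hst : s ≠ t) : IndepFun (X s) (X t) μ := by
  simpa [Nat.sub_add_cancel hs, Nat.sub_add_cancel ht] using
    h.indepFun (show s - 1 ≠ t - 1 by omega)

theorem sum_range_enorm_rpow_le_of_abs_le_geometric {cs : ℕ → ℝ} {c ρ r : ℝ} (hρ0 : 0 ≤ ρ)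
    (hρ1 : ρ < 1) (hr : 0 < r) (hcs : ∀ m, |cs m| ≤ c * ρ ^ m) (n : ℕ) :
    ∑ m ∈ range n, ‖cs m‖ₑ ^ r ≤ ENNReal.ofReal (c ^ r / (1 - ρ ^ r)) := by
  have hc : 0 ≤ c := by simpa using (abs_nonneg _).trans (hcs 0)
  have hρr0 : 0 ≤ ρ ^ r := Real.rpow_nonneg hρ0 r
  have hρr1 : ρ ^ r < 1 := Real.rpow_lt_one hρ0 hρ1 hr
  have hterm : ∀ m, |cs m| ^ r ≤ c ^ r * (ρ ^ r) ^ m := fun m => by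
    calc |cs m| ^ r ≤ (c * ρ ^ m) ^ r := by gcongr; exact hcs m
      _ = c ^ r * (ρ ^ r) ^ m := by
        rw [Real.mul_rpow hc (by positivity), ← Real.rpow_natCast, ← Real.rpow_natCast,
          ← Real.rpow_mul hρ0, ← Real.rpow_mul hρ0, mul_comm (m : ℝ) r]
  have hgeom : ∑ m ∈ range n, (ρ ^ r) ^ m ≤ (1 - ρ ^ r)⁻¹ :=
    (summable_geometric_of_lt_one hρr0 hρr1).sum_le_tsum _ (fun m _ => by positivity)
      |>.trans_eq (tsum_geometric_of_lt_one hρr0 hρr1)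
  simp_rw [← ENNReal.ofReal_abs_rpow_eq_enorm_rpow _ hr.le]
  rw [← ENNReal.ofReal_sum_of_nonneg fun m _ => by positivity]
  gcongr
  calc ∑ m ∈ range n, |cs m| ^ r ≤ ∑ m ∈ range n, c ^ r * (ρ ^ r) ^ m :=
        sum_le_sum fun m _ => hterm m
    _ = c ^ r * ∑ m ∈ range n, (ρ ^ r) ^ m := (mul_sum _ _ _).symm
    _ ≤ c ^ r * (1 - ρ ^ r)⁻¹ := by gcongr
    _ = c ^ r / (1 - ρ ^ r) := (div_eq_mul_inv _ _).symm

def crossDiag (cs e : ℕ → ℝ) (T : ℕ) : ℝ :=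
  ∑ t ∈ Icc 1 T, ∑ m ∈ range t, cs m * e (t - m) ^ 2

def crossOffDiag (cs e : ℕ → ℝ) (T : ℕ) : ℝ :=
  ∑ t ∈ Icc 1 T, ∑ m ∈ range t, ∑ s ∈ (Icc 1 t).erase (t - m), cs m * (e s * e (t - m))

theorem sum_Icc_mul_eq_crossDiag_add_crossOffDiag (cs e : ℕ → ℝ) (T : ℕ) :
    ∑ t ∈ Icc 1 T, (∑ s ∈ Icc 1 t, e s) * ∑ m ∈ range t, cs m * e (t - m) =
      crossDiag cs e T + crossOffDiag cs e T := by
  simp only [crossDiag, crossOffDiag, ← sum_add_distrib]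
  refine sum_congr rfl fun t ht => ?_
  rw [sum_mul_sum, sum_comm]
  refine sum_congr rfl fun m hm => ?_
  have hdiag : t - m ∈ Icc 1 t := by
    simp only [mem_Icc, mem_range] at ht hm ⊢
    omega
  rw [← add_sum_erase _ _ hdiag]
  congr 1
  · ring
  · exact sum_congr rfl fun s _ => by ring

section CrossProduct

variable {Ω : Type*} [MeasurableSpace Ω] {P : Measure Ω} {ε : ℕ → Ω → ℝ} {cs : ℕ → ℝ} {r : ℝ}
  {B M : ℝ≥0∞}

theorem lintegral_enorm_crossDiag_rpow_le (hε : ∀ t, Measurable (ε t)) (hr0 : 0 < r)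
    (hr1 : r ≤ 1) (hM : ∀ s, 1 ≤ s → ∫⁻ ω, ‖ε s ω‖ₑ ^ (2 * r) ∂P ≤ M)
    (hB : ∀ n, ∑ m ∈ range n, ‖cs m‖ₑ ^ r ≤ B) (T : ℕ) :
    ∫⁻ ω, ‖crossDiag cs (ε · ω) T‖ₑ ^ r ∂P ≤ T * (B * M) := by
  have hterm : ∀ t m, m < t → ∫⁻ ω, ‖cs m * ε (t - m) ω ^ 2‖ₑ ^ r ∂P ≤ ‖cs m‖ₑ ^ r * M := by
    intro t m hm
    simp_rw [enorm_mul, enorm_pow, ENNReal.mul_rpow_of_nonneg _ _ hr0.le,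
      ← ENNReal.rpow_natCast, ← ENNReal.rpow_mul]
    rw [lintegral_const_mul' _ _ (by simp [hr0.le])]
    gcongr
    exact_mod_cast hM _ (by omega)
  unfold crossDiag
  calc ∫⁻ ω, ‖∑ t ∈ Icc 1 T, ∑ m ∈ range t, cs m * ε (t - m) ω ^ 2‖ₑ ^ r ∂P
      ≤ ∑ t ∈ Icc 1 T, ∫⁻ ω, ‖∑ m ∈ range t, cs m * ε (t - m) ω ^ 2‖ₑ ^ r ∂P :=
        lintegral_enorm_sum_rpow_le _ (fun t _ => by fun_prop) hr0 hr1
    _ ≤ ∑ t ∈ Icc 1 T, ∑ m ∈ range t, ∫⁻ ω, ‖cs m * ε (t - m) ω ^ 2‖ₑ ^ r ∂P := by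
        gcongr with t
        exact lintegral_enorm_sum_rpow_le _ (fun m _ => by fun_prop) hr0 hr1
    _ ≤ ∑ t ∈ Icc 1 T, (∑ m ∈ range t, ‖cs m‖ₑ ^ r) * M := by
        simp_rw [sum_mul]
        gcongr with t _ m hm
        exact hterm t m (mem_range.1 hm)
    _ ≤ ∑ t ∈ Icc 1 T, B * M := by gcongr with t; exact hB t
    _ = T * (B * M) := by simp

theorem lintegral_enorm_crossOffDiag_rpow_le (hε : ∀ t, Measurable (ε t)) (hr0 : 0 < r)
    (hr1 : r ≤ 1) (hind : ∀ s s', 1 ≤ s → 1 ≤ s' → s ≠ s' → IndepFun (ε s) (ε s') P)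
    (hM : ∀ s, 1 ≤ s → ∫⁻ ω, ‖ε s ω‖ₑ ^ r ∂P ≤ M)
    (hB : ∀ n, ∑ m ∈ range n, ‖cs m‖ₑ ^ r ≤ B) (T : ℕ) :
    ∫⁻ ω, ‖crossOffDiag cs (ε · ω) T‖ₑ ^ r ∂P ≤ (T * M) ^ 2 * B := by
  have hterm : ∀ t m s, m < t → s ∈ (Icc 1 t).erase (t - m) →
      ∫⁻ ω, ‖cs m * (ε s ω * ε (t - m) ω)‖ₑ ^ r ∂P ≤ ‖cs m‖ₑ ^ r * M ^ 2 := by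
    intro t m s hm hs
    simp only [mem_erase, mem_Icc] at hs
    simp_rw [enorm_mul (cs m), ENNReal.mul_rpow_of_nonneg _ _ hr0.le]
    rw [lintegral_const_mul' _ _ (by simp [hr0.le]),
      (hind s (t - m) hs.2.1 (by omega) hs.1).lintegral_enorm_mul_rpow (hε _).aemeasurable
        (hε _).aemeasurable hr0.le, sq]
    gcongr
    exacts [hM s hs.2.1, hM _ (by omega)]
  unfold crossOffDiag
  calc ∫⁻ ω, ‖∑ t ∈ Icc 1 T, ∑ m ∈ range t, ∑ s ∈ (Icc 1 t).erase (t - m),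
        cs m * (ε s ω * ε (t - m) ω)‖ₑ ^ r ∂P
      ≤ ∑ t ∈ Icc 1 T, ∑ m ∈ range t, ∑ s ∈ (Icc 1 t).erase (t - m),
          ∫⁻ ω, ‖cs m * (ε s ω * ε (t - m) ω)‖ₑ ^ r ∂P := by
        refine (lintegral_enorm_sum_rpow_le _ (fun t _ => by fun_prop) hr0 hr1).trans ?_
        gcongr with t
        refine (lintegral_enorm_sum_rpow_le _ (fun m _ => by fun_prop) hr0 hr1).trans ?_
        gcongr with m
        exact lintegral_enorm_sum_rpow_le _ (fun s _ => by fun_prop) hr0 hr1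
    _ ≤ ∑ t ∈ Icc 1 T, ∑ m ∈ range t, T * (‖cs m‖ₑ ^ r * M ^ 2) := by
        gcongr with t ht m hm
        refine (sum_le_card_nsmul _ _ _ fun s hs => hterm t m s (mem_range.1 hm) hs).trans ?_
        rw [nsmul_eq_mul]
        gcongr
        exact card_erase_le.trans (by simpa using (mem_Icc.1 ht).2)
    _ ≤ ∑ t ∈ Icc 1 T, T * (B * M ^ 2) := by
        refine sum_le_sum fun t _ => ?_
        simp_rw [← mul_sum, ← sum_mul]
        gcongr
        exact hB t
    _ = (T * M) ^ 2 * B := by simp; ring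

theorem lintegral_enorm_crossOffDiag_rpow_half_le [IsProbabilityMeasure P]
    (hε : ∀ t, Measurable (ε t)) (hr0 : 0 < r) (hr1 : r ≤ 1)
    (hind : ∀ s s', 1 ≤ s → 1 ≤ s' → s ≠ s' → IndepFun (ε s) (ε s') P)
    (hM : ∀ s, 1 ≤ s → ∫⁻ ω, ‖ε s ω‖ₑ ^ r ∂P ≤ M)
    (hB : ∀ n, ∑ m ∈ range n, ‖cs m‖ₑ ^ r ≤ B) (T : ℕ) :
    ∫⁻ ω, ‖crossOffDiag cs (ε · ω) T‖ₑ ^ (r / 2) ∂P ≤ T * M * B ^ (1 / 2 : ℝ) := by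
  calc ∫⁻ ω, ‖crossOffDiag cs (ε · ω) T‖ₑ ^ (r / 2) ∂P
      ≤ (∫⁻ ω, ‖crossOffDiag cs (ε · ω) T‖ₑ ^ r ∂P) ^ (1 / 2 : ℝ) := by
        rw [show (1 / 2 : ℝ) = r / 2 / r by field_simp]
        exact lintegral_enorm_rpow_le_of_exponent_le (by unfold crossOffDiag; fun_prop)
          (by positivity) (by linarith)
    _ ≤ ((T * M) ^ 2 * B) ^ (1 / 2 : ℝ) := by
        gcongr
        exact lintegral_enorm_crossOffDiag_rpow_le hε hr0 hr1 hind hM hB T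
    _ = T * M * B ^ (1 / 2 : ℝ) := by
        rw [ENNReal.mul_rpow_of_nonneg _ _ (by positivity), ← ENNReal.rpow_two,
          ← ENNReal.rpow_mul]
        norm_num

end CrossProduct

/-- Let `0 < p ≤ 1`, `0 < ρ < 1`, `c > 0`, `K > 0`.  There is a constant `c₀ > 0` depending only
on `p, ρ, c, K` such that: for any probability space and i.i.d. real random variables
`(ε_t)_{t ≥ 1}` with `E|ε_1|^p ≤ K`, and any reals `(c_m)_{m ≥ 0}` with `|c_m| ≤ c ρ^m`, setting
`x_t = ∑_{s=1}^t ε_s` and `u_t = ∑_{m=0}^{t−1} c_m ε_{t−m}`, one has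
`E|∑_{t=1}^T x_t u_t|^{p/2} ≤ c₀ T` for every `T ≥ 1`. -/
theorem cross_product_moment_bound (p ρ c K : ℝ)
    (hp0 : 0 < p) (hp1 : p ≤ 1) (hρ0 : 0 < ρ) (hρ1 : ρ < 1) (hc : 0 < c) (hK : 0 < K) :
    ∃ c₀ : ℝ, 0 < c₀ ∧
      ∀ (Ω : Type) [MeasurableSpace Ω] (P : Measure Ω), IsProbabilityMeasure P →
        ∀ ε : ℕ → Ω → ℝ,
          (∀ t, Measurable (ε t)) →
          iIndepFun (fun n => ε (n + 1)) P →
          (∀ s t : ℕ, IdentDistrib (ε (s + 1)) (ε (t + 1)) P P) →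
          (∫⁻ ω, ENNReal.ofReal (|ε 1 ω| ^ p) ∂P ≤ ENNReal.ofReal K) →
          ∀ cs : ℕ → ℝ,
            (∀ m, |cs m| ≤ c * ρ ^ m) →
            ∀ T : ℕ, 1 ≤ T →
              ∫⁻ ω, ENNReal.ofReal
                  (|∑ t ∈ Finset.Icc 1 T, (∑ s ∈ Finset.Icc 1 t, ε s ω) *
                      (∑ m ∈ Finset.range t, cs m * ε (t - m) ω)| ^ (p / 2)) ∂P ≤
                ENNReal.ofReal (c₀ * T) := by
  set q := p / 2 with hq
  have hq0 : 0 < q := by positivity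
  have hq1 : q ≤ 1 := by linarith
  have hA : ∀ r : ℝ, 0 < r → 0 < c ^ r / (1 - ρ ^ r) := fun r hr =>
    div_pos (by positivity) (sub_pos.2 (Real.rpow_lt_one hρ0.le hρ1 hr))
  have hAq := hA q hq0
  have hAp := hA p hp0
  refine ⟨(c ^ q / (1 - ρ ^ q) + (c ^ p / (1 - ρ ^ p)) ^ (1 / 2 : ℝ)) * K, by positivity, ?_⟩
  intro Ω _ P _ ε hε hind hid hmom cs hcs T _
  have hM : ∀ s, 1 ≤ s → ∫⁻ ω, ‖ε s ω‖ₑ ^ p ∂P ≤ ENNReal.ofReal K := fun s hs => by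
    obtain ⟨n, rfl⟩ := Nat.exists_eq_add_of_le' hs
    rw [(hid n 0).lintegral_enorm_rpow_eq]
    simpa only [ENNReal.ofReal_abs_rpow_eq_enorm_rpow _ hp0.le] using hmom
  have hB : ∀ r : ℝ, 0 < r →
      ∀ n, ∑ m ∈ range n, ‖cs m‖ₑ ^ r ≤ ENNReal.ofReal (c ^ r / (1 - ρ ^ r)) :=
    fun r hr => sum_range_enorm_rpow_le_of_abs_le_geometric hρ0.le hρ1 hr hcs
  have hdiag := lintegral_enorm_crossDiag_rpow_le (P := P) hε hq0 hq1
    (by rwa [mul_div_cancel₀ _ two_ne_zero]) (hB q hq0) T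
  have hoff := lintegral_enorm_crossOffDiag_rpow_half_le hε hp0 hp1
    (fun _ _ => hind.indepFun_of_one_le) hM (hB p hp0) T
  simp_rw [ENNReal.ofReal_abs_rpow_eq_enorm_rpow _ hq0.le,
    sum_Icc_mul_eq_crossDiag_add_crossOffDiag]
  calc _ ≤ _ := lintegral_enorm_add_rpow_le (by unfold crossDiag; fun_prop) hq0.le hq1
    _ ≤ _ := add_le_add hdiag hoff
    _ = _ := by
      rw [ENNReal.ofReal_mul (by positivity), ENNReal.ofReal_mul (by positivity),
        ENNReal.ofReal_add hAq.le (by positivity),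
        ENNReal.ofReal_rpow_of_nonneg hAp.le (by norm_num), ENNReal.ofReal_natCast]
      ring
end

section
/- Consider a probability space (Ω, 𝓕, P) and mutually independent events R_1, …, R_N, and fix m ∈ {0, 1, …, N} and α, π ∈ [0, 1] such that P(R_j) = α for every j ≤ m and P(R_j) = π for every j > m. Define the top-down estimator m̃ : Ω → {0, 1, …, N} by m̃(ω) = max{ j ∈ {1, …, N} : ω ∉ R_j and ω ∈ R_i for every i with j < i ≤ N }, with m̃(ω) = 0 if ω ∈ R_j for every j. Then: (i) P(m̃ = p) = π^{N−p} (1 − π) for every p with m + 1 ≤ p ≤ N; (ii) P(m̃ = p) = π^{N−m} α^{m−p} (1 − α) for every p with 1 ≤ p ≤ m; and (iii) P(m̃ = 0) = π^{N−m} α^m. -/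
open MeasureTheory ProbabilityTheory
open scoped Classical

/-- The top-down estimator: `mtilde R ω` is the largest (1-based) index `j ∈ {1, …, N}` such
that `ω ∉ R j` and `ω ∈ R i` for every `i` with `j < i ≤ N`, and `0` if `ω ∈ R j` for every
`j` (indices of `R` are 0-based, so the 1-based index of `R j` is `j + 1`). -/
noncomputable def mtilde {Ω : Type*} {N : ℕ} (R : Fin N → Set Ω) (ω : Ω) : ℕ :=
  (Finset.univ.filter fun j : Fin N =>
      ω ∉ R j ∧ ∀ i : Fin N, j < i → ω ∈ R i).sup fun j => (j : ℕ) + 1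

/-- Full probability mass function of the top-down estimator: with mutually independent
rejection events `R_1, …, R_N` of probability `α` for `j ≤ m` and `π` for `j > m`
(`0 ≤ m ≤ N`), one has `P(m̃ = p) = π^{N−p}(1−π)` for `m + 1 ≤ p ≤ N`,
`P(m̃ = p) = π^{N−m} α^{m−p} (1−α)` for `1 ≤ p ≤ m`, and `P(m̃ = 0) = π^{N−m} α^m`. -/
theorem topdown_pmf {Ω : Type*} [MeasurableSpace Ω] (P : Measure Ω)
    [IsProbabilityMeasure P] {N : ℕ} (R : Fin N → Set Ω)
    (hmeas : ∀ j, MeasurableSet (R j)) (hindep : iIndepSet R P)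
    (m : ℕ) (hmN : m ≤ N) (α π : ℝ)
    (hα : α ∈ Set.Icc (0 : ℝ) 1) (hπ : π ∈ Set.Icc (0 : ℝ) 1)
    (hnull : ∀ j : Fin N, (j : ℕ) + 1 ≤ m → P (R j) = ENNReal.ofReal α)
    (halt : ∀ j : Fin N, m < (j : ℕ) + 1 → P (R j) = ENNReal.ofReal π) :
    (∀ p : ℕ, m + 1 ≤ p → p ≤ N →
        P {ω | mtilde R ω = p} = ENNReal.ofReal (π ^ (N - p) * (1 - π))) ∧
      (∀ p : ℕ, 1 ≤ p → p ≤ m →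
        P {ω | mtilde R ω = p} = ENNReal.ofReal (π ^ (N - m) * α ^ (m - p) * (1 - α))) ∧
      P {ω | mtilde R ω = 0} = ENNReal.ofReal (π ^ (N - m) * α ^ m) := by
  obtain ⟨hα0, hα1⟩ := hα
  obtain ⟨hπ0, hπ1⟩ := hπ
  set S : ℕ → Finset (Fin N) := fun k => Finset.univ.filter fun i : Fin N => k ≤ (i : ℕ)
    with hS
  set A : ℕ → Set Ω := fun k => ⋂ i ∈ S k, R i with hA
  have hmemA : ∀ k ω, ω ∈ A k ↔ ∀ i : Fin N, k ≤ (i : ℕ) → ω ∈ R i := by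
    intro k ω
    simp [hA, hS]
  have hAmeas : ∀ k, MeasurableSet (A k) :=
    fun k => Finset.measurableSet_biInter _ fun i _ => hmeas i
  have hAmono : ∀ {k l : ℕ}, k ≤ l → A k ⊆ A l := by
    intro k l hkl ω hω
    rw [hmemA] at hω ⊢
    exact fun i hi => hω i (hkl.trans hi)
  -- cardinality of interval filters on Fin N
  have hcard : ∀ a b : ℕ, b ≤ N →
      (Finset.univ.filter fun i : Fin N => a ≤ (i : ℕ) ∧ (i : ℕ) < b).card = b - a := by
    intro a b hb
    rw [← Nat.card_Ico a b]
    apply Finset.card_bij (fun (i : Fin N) _ => (i : ℕ))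
    · intro i hi
      simp only [Finset.mem_filter] at hi
      exact Finset.mem_Ico.2 hi.2
    · intro i _ j _ h
      exact Fin.ext h
    · intro x hx
      rw [Finset.mem_Ico] at hx
      refine ⟨⟨x, by omega⟩, ?_, rfl⟩
      simp only [Finset.mem_filter, Finset.mem_univ, true_and]
      exact hx
  -- probability of A k
  have hQ : ∀ k : ℕ, P (A k) = ENNReal.ofReal (π ^ (N - max k m) * α ^ (m - k)) := by
    intro k
    rw [hA]
    rw [hindep.meas_biInter (S k)]
    have hcongr : ∀ i ∈ S k, P (R i)
        = if (i : ℕ) + 1 ≤ m then ENNReal.ofReal α else ENNReal.ofReal π := by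
      intro i _
      split_ifs with h
      · exact hnull i h
      · exact halt i (by omega)
    rw [Finset.prod_congr rfl hcongr, Finset.prod_ite, Finset.prod_const, Finset.prod_const]
    have h1 : ((S k).filter fun i : Fin N => (i : ℕ) + 1 ≤ m).card = m - k := by
      rw [hS, Finset.filter_filter]
      rw [Finset.filter_congr (q := fun i : Fin N => k ≤ (i : ℕ) ∧ (i : ℕ) < m)
        (fun i _ => by constructor <;> (intro h; constructor <;> omega))]
      exact hcard k m hmN
    have h2 : ((S k).filter fun i : Fin N => ¬((i : ℕ) + 1 ≤ m)).card = N - max k m := by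
      rw [hS, Finset.filter_filter]
      rw [Finset.filter_congr (q := fun i : Fin N => max k m ≤ (i : ℕ) ∧ (i : ℕ) < N)
        (fun i _ => by constructor <;> (intro h; constructor <;> omega))]
      exact hcard (max k m) N le_rfl
    rw [h1, h2, ← ENNReal.ofReal_pow hα0, ← ENNReal.ofReal_pow hπ0,
      ← ENNReal.ofReal_mul (pow_nonneg hα0 _), mul_comm]
  -- event description for p ≥ 1
  have hev : ∀ p : ℕ, 1 ≤ p → p ≤ N → {ω | mtilde R ω = p} = A p \ A (p - 1) := by
    intro p hp1 hpN
    ext ω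
    set T : Finset (Fin N) := Finset.univ.filter fun j : Fin N =>
      ω ∉ R j ∧ ∀ i : Fin N, j < i → ω ∈ R i with hT
    have hmt : mtilde R ω = T.sup fun j => (j : ℕ) + 1 := rfl
    simp only [Set.mem_setOf_eq, Set.mem_diff]
    constructor
    · intro h
      have hTne : T.Nonempty := by
        by_contra hne
        rw [Finset.not_nonempty_iff_eq_empty] at hne
        rw [hmt, hne] at h
        simp at h
        omega
      obtain ⟨j, hjT, hsup⟩ := Finset.exists_mem_eq_sup T hTne fun j => (j : ℕ) + 1
      rw [hmt, hsup] at h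
      rw [hT, Finset.mem_filter] at hjT
      obtain ⟨-, hjR, hja⟩ := hjT
      constructor
      · rw [hmemA]
        intro i hi
        exact hja i (by rw [Fin.lt_def]; omega)
      · intro hmem
        rw [hmemA] at hmem
        exact hjR (hmem j (by omega))
    · rintro ⟨hAp, hAp1⟩
      rw [hmemA] at hAp
      have hj0lt : p - 1 < N := by omega
      set j0 : Fin N := ⟨p - 1, hj0lt⟩ with hj0
      have hnR : ω ∉ R j0 := by
        intro hR
        apply hAp1
        rw [hmemA]
        intro i hi
        by_cases hip : p ≤ (i : ℕ)
        · exact hAp i hip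
        · have : i = j0 := Fin.ext (by simp [hj0]; omega)
          rw [this]; exact hR
      have hj0T : j0 ∈ T := by
        rw [hT, Finset.mem_filter]
        refine ⟨Finset.mem_univ _, hnR, fun i hi => ?_⟩
        rw [Fin.lt_def] at hi
        exact hAp i (by simp [hj0] at hi; omega)
      rw [hmt]
      apply le_antisymm
      · apply Finset.sup_le
        intro j hj
        rw [hT, Finset.mem_filter] at hj
        by_contra hgt
        have : p ≤ (j : ℕ) := by omega
        exact hj.2.1 (hAp j this)
      · have := Finset.le_sup (f := fun j : Fin N => (j : ℕ) + 1) hj0T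
        simpa [hj0, Nat.sub_add_cancel hp1] using this
  -- event description for p = 0
  have hev0 : {ω | mtilde R ω = 0} = A 0 := by
    ext ω
    set T : Finset (Fin N) := Finset.univ.filter fun j : Fin N =>
      ω ∉ R j ∧ ∀ i : Fin N, j < i → ω ∈ R i with hT
    have hmt : mtilde R ω = T.sup fun j => (j : ℕ) + 1 := rfl
    simp only [Set.mem_setOf_eq]
    constructor
    · intro h
      rw [hmemA]
      intro i _
      by_contra hni
      have hTne : (Finset.univ.filter fun j : Fin N => ω ∉ R j).Nonempty :=
        ⟨i, by simp [hni]⟩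
      obtain ⟨j, hj, hjmax⟩ := Finset.exists_max_image _ (fun j : Fin N => (j : ℕ)) hTne
      rw [Finset.mem_filter] at hj
      have hjT : j ∈ T := by
        rw [hT, Finset.mem_filter]
        refine ⟨Finset.mem_univ _, hj.2, fun i' hi' => ?_⟩
        by_contra hni'
        have := hjmax i' (by simp [hni'])
        rw [Fin.lt_def] at hi'
        omega
      have := Finset.le_sup (f := fun j : Fin N => (j : ℕ) + 1) hjT
      rw [← hmt, h] at this
      simp at this
    · intro h
      rw [hmemA] at h
      have hTe : T = ∅ := by
        rw [hT, Finset.filter_eq_empty_iff]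
        intro j _
        simp only [not_and]
        intro hj
        exact absurd (h j (by omega)) hj
      rw [hmt, hTe]
      simp
  refine ⟨?_, ?_, ?_⟩
  · intro p hp1 hpN
    rw [hev p (by omega) hpN,
      measure_diff (hAmono (by omega : p - 1 ≤ p)) (hAmeas (p - 1)).nullMeasurableSet
        (measure_ne_top P _),
      hQ, hQ]
    have hmax1 : max p m = p := by omega
    have hmax2 : max (p - 1) m = p - 1 := by omega
    rw [hmax1, hmax2, Nat.sub_eq_zero_of_le (by omega : m ≤ p),
      Nat.sub_eq_zero_of_le (by omega : m ≤ p - 1)]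
    rw [← ENNReal.ofReal_sub _ (by positivity)]
    congr 1
    have : N - (p - 1) = (N - p) + 1 := by omega
    rw [this, pow_succ]
    ring
  · intro p hp1 hpm
    rw [hev p hp1 (by omega),
      measure_diff (hAmono (by omega : p - 1 ≤ p)) (hAmeas (p - 1)).nullMeasurableSet
        (measure_ne_top P _),
      hQ, hQ]
    have hmax1 : max p m = m := by omega
    have hmax2 : max (p - 1) m = m := by omega
    rw [hmax1, hmax2, ← ENNReal.ofReal_sub _ (by positivity)]
    congr 1
    have : m - (p - 1) = (m - p) + 1 := by omega
    rw [this, pow_succ]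
    ring
  · rw [hev0, hQ]
    simp
end

section
/- For each k ≥ 1, consider a probability space carrying mutually independent events R_1^k, …, R_N^k with P(R_j^k) = α_k for j ≤ m and P(R_j^k) = π_k for j > m, where m ∈ {0, 1, …, N} is fixed and α_k, π_k ∈ [0, 1]. Let m̂_k be the bottom-up estimator defined by m̂_k(ω) = (min{ j : ω ∈ R_j^k }) − 1 if ω ∈ R_j^k for some j, and m̂_k(ω) = N otherwise. If α_k → 0 and π_k → 1 as k → ∞, then P(m̂_k = m) → 1 as k → ∞. -/
/-
The estimator is wrong only if one of the tests `j ≤ m` rejects a true null, or the test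
`m + 1` fails to reject a false one. By the union bound,
`P(m̂_k ≠ m) ≤ m α_k + (1 - π_k) → 0`.
-/

open MeasureTheory ProbabilityTheory Filter
open scoped Classical

/-- The bottom-up estimator: `mhat R ω` is one less than the smallest (1-based) index `j` with
`ω ∈ R j` if such an index exists (i.e. it is the smallest 0-based index `k` with
`ω ∈ R ⟨k, _⟩`), and `N` otherwise. -/
noncomputable def mhat {Ω : Type*} {N : ℕ} (R : Fin N → Set Ω) (ω : Ω) : ℕ :=
  if ∃ j : Fin N, ω ∈ R j then sInf {k : ℕ | ∃ h : k < N, ω ∈ R ⟨k, h⟩} else N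

open Topology

section ProbabilityToOne

variable {β : Type*} {Ω : β → Type*} [∀ b, MeasurableSpace (Ω b)] {μ : ∀ b, Measure (Ω b)}
  {l : Filter β}

theorem tendsto_measure_biUnion_finset_nhds_zero {ι : Type*} (S : Finset ι)
    {s : ∀ b, ι → Set (Ω b)} (h : ∀ i ∈ S, Tendsto (fun b => μ b (s b i)) l (𝓝 0)) :
    Tendsto (fun b => μ b (⋃ i ∈ S, s b i)) l (𝓝 0) := by
  have hsum : Tendsto (fun b => ∑ i ∈ S, μ b (s b i)) l (𝓝 0) := by
    simpa using tendsto_finsetSum S h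
  exact tendsto_of_tendsto_of_tendsto_of_le_of_le tendsto_const_nhds hsum
    (fun _ => zero_le) fun b => measure_biUnion_finset_le S (s b)

theorem tendsto_measure_nhds_one_of_compl [∀ b, IsProbabilityMeasure (μ b)]
    {A : ∀ b, Set (Ω b)} (h : Tendsto (fun b => μ b (A b)ᶜ) l (𝓝 0)) :
    Tendsto (fun b => μ b (A b)) l (𝓝 1) := by
  have hlower : Tendsto (fun b => 1 - μ b (A b)ᶜ) l (𝓝 1) := by
    simpa using ENNReal.Tendsto.sub tendsto_const_nhds h (Or.inl ENNReal.one_ne_top)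
  refine tendsto_of_tendsto_of_tendsto_of_le_of_le hlower tendsto_const_nhds (fun b => ?_)
    fun b => prob_le_one
  rw [tsub_le_iff_right, ← measure_univ (μ := μ b)]
  exact measure_univ_le_add_compl _

theorem tendsto_measure_compl_nhds_zero [∀ b, IsProbabilityMeasure (μ b)]
    {A : ∀ b, Set (Ω b)} (hA : ∀ b, MeasurableSet (A b))
    (h : Tendsto (fun b => μ b (A b)) l (𝓝 1)) :
    Tendsto (fun b => μ b (A b)ᶜ) l (𝓝 0) := by
  simp_rw [prob_compl_eq_one_sub (hA _)]
  simpa using ENNReal.Tendsto.sub tendsto_const_nhds h (Or.inl ENNReal.one_ne_top)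

end ProbabilityToOne

section Estimator

variable {Ω : Type*} {N : ℕ} (R : Fin N → Set Ω) {m : ℕ}

theorem mhat_eq_of_forall (hmN : m ≤ N) {ω : Ω} (h_below : ∀ j : Fin N, (j : ℕ) < m → ω ∉ R j)
    (h_at : ∀ j : Fin N, (j : ℕ) = m → ω ∈ R j) : mhat R ω = m := by
  rcases hmN.lt_or_eq with hm | rfl
  · have hmem : m ∈ {k : ℕ | ∃ h : k < N, ω ∈ R ⟨k, h⟩} := ⟨hm, h_at ⟨m, hm⟩ rfl⟩
    rw [mhat, if_pos ⟨_, hmem.2⟩]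
    refine le_antisymm (Nat.sInf_le hmem) (le_csInf ⟨m, hmem⟩ ?_)
    rintro k ⟨hk, hωk⟩
    exact not_lt.1 fun hkm => h_below ⟨k, hk⟩ hkm hωk
  · rw [mhat, if_neg]
    rintro ⟨j, hj⟩
    exact h_below j j.isLt hj

theorem compl_setOf_mhat_eq_subset (hmN : m ≤ N) :
    {ω | mhat R ω = m}ᶜ ⊆
      (⋃ j ∈ Finset.univ.filter (fun j : Fin N => (j : ℕ) < m), R j) ∪
        ⋃ j ∈ Finset.univ.filter (fun j : Fin N => (j : ℕ) = m), (R j)ᶜ := by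
  intro ω hω
  by_contra hcover
  simp only [Set.mem_union, Set.mem_iUnion, Finset.mem_filter, Finset.mem_univ, true_and,
    Set.mem_compl_iff, exists_prop, not_or, not_exists, not_and, not_not] at hcover
  exact hω (mhat_eq_of_forall R hmN hcover.1 hcover.2)

end Estimator

theorem bottomup_consistency_general {N : ℕ} (m : ℕ) (hmN : m ≤ N)
    (Ω : ℕ → Type*) (mΩ : ∀ k, MeasurableSpace (Ω k)) (P : ∀ k, Measure (Ω k))
    (hP : ∀ k, IsProbabilityMeasure (P k))
    (R : ∀ k, Fin N → Set (Ω k)) (hmeas : ∀ k j, MeasurableSet (R k j))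
    (α π : ℕ → ℝ)
    (hnull : ∀ k, ∀ j : Fin N, (j : ℕ) + 1 ≤ m → P k (R k j) = ENNReal.ofReal (α k))
    (halt : ∀ k, ∀ j : Fin N, m < (j : ℕ) + 1 → P k (R k j) = ENNReal.ofReal (π k))
    (hα0 : Tendsto α atTop (nhds 0)) (hπ1 : Tendsto π atTop (nhds 1)) :
    Tendsto (fun k => P k {ω | mhat (R k) ω = m}) atTop (nhds 1) := by
  set nullTests := Finset.univ.filter fun j : Fin N => (j : ℕ) < m
  set firstAltTest := Finset.univ.filter fun j : Fin N => (j : ℕ) = m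
  have hfalse_rejection : Tendsto (fun k => P k (⋃ j ∈ nullTests, R k j)) atTop (𝓝 0) :=
    tendsto_measure_biUnion_finset_nhds_zero nullTests fun j hj => by
      simp_rw [hnull _ j (Finset.mem_filter.1 hj).2]
      simpa using ENNReal.tendsto_ofReal hα0
  have hmissed_rejection : Tendsto (fun k => P k (⋃ j ∈ firstAltTest, (R k j)ᶜ)) atTop (𝓝 0) :=
    tendsto_measure_biUnion_finset_nhds_zero firstAltTest fun j hj => by
      refine tendsto_measure_compl_nhds_zero (hmeas · j) ?_
      simp_rw [halt _ j ((Finset.mem_filter.1 hj).2 ▸ Nat.lt_succ_self m)]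
      simpa using ENNReal.tendsto_ofReal hπ1
  refine tendsto_measure_nhds_one_of_compl <| tendsto_of_tendsto_of_tendsto_of_le_of_le
    tendsto_const_nhds (by simpa only [add_zero] using hfalse_rejection.add hmissed_rejection)
    (fun _ => zero_le) fun k => ?_
  exact (measure_mono (compl_setOf_mhat_eq_subset (R k) hmN)).trans (measure_union_le _ _)

/-- **Consistency of the bottom-up estimator.** For each `k`, let `R_1^k, …, R_N^k` be mutually
independent rejection events with probability `α_k` for `j ≤ m` and `π_k` for `j > m`.  If
`α_k → 0` and `π_k → 1`, then `P(m̂_k = m) → 1`. -/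
theorem bottomup_consistency {N : ℕ} (m : ℕ) (hmN : m ≤ N)
    (Ω : ℕ → Type*) (mΩ : ∀ k, MeasurableSpace (Ω k)) (P : ∀ k, Measure (Ω k))
    (hP : ∀ k, IsProbabilityMeasure (P k))
    (R : ∀ k, Fin N → Set (Ω k)) (hmeas : ∀ k j, MeasurableSet (R k j))
    (hindep : ∀ k, iIndepSet (R k) (P k))
    (α π : ℕ → ℝ)
    (hα : ∀ k, α k ∈ Set.Icc (0 : ℝ) 1) (hπ : ∀ k, π k ∈ Set.Icc (0 : ℝ) 1)
    (hnull : ∀ k, ∀ j : Fin N, (j : ℕ) + 1 ≤ m → P k (R k j) = ENNReal.ofReal (α k))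
    (halt : ∀ k, ∀ j : Fin N, m < (j : ℕ) + 1 → P k (R k j) = ENNReal.ofReal (π k))
    (hα0 : Tendsto α atTop (nhds 0)) (hπ1 : Tendsto π atTop (nhds 1)) :
    Tendsto (fun k => P k {ω | mhat (R k) ω = m}) atTop (nhds 1) :=
  bottomup_consistency_general m hmN Ω mΩ P hP R hmeas α π hnull halt hα0 hπ1
end

section
/- Let (ξ_i)_{i≥1} be i.i.d. standard Gaussian real random variables on a probability space (Ω, 𝓕, P), and let (φ_M)_{M≥1} be positive real numbers with φ_M → 0 as M → ∞. Then for every real u ≠ 0, the random variables M^{-1} · ( M^{-1/2} Σ_{i=1}^M (1{ξ_i ≤ u/φ_M} − 1/2) )² converge in probability to 1/4 as M → ∞. -/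
/-!
The statistic equals `(F_M(u / φ_M) - 1/2)²`, where `F_M` is the empirical distribution function
of `ξ_1, …, ξ_M`. Since `u / φ_M → ±∞`, the mean `Φ(u / φ_M)` of `F_M(u / φ_M)` tends to
`p = 1{u > 0}`, while by pairwise independence its variance is at most `1 / (4M)`; Chebyshev's
inequality gives `F_M(u / φ_M) → p` in probability. Finally `x ↦ (x - 1/2)²` is `1`-Lipschitz on
`[0, 1]` and `(p - 1/2)² = 1/4`.
-/

open MeasureTheory ProbabilityTheory Filter Set Topology

section ConvergenceInMeasure

variable {ι α E : Type*} [MeasurableSpace α] {μ : Measure α} {l : Filter ι}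

theorem TendstoInMeasure.of_eventually_dist_le [PseudoMetricSpace E] {f F : ι → α → E}
    {g G : α → E} (hf : TendstoInMeasure μ f l g)
    (hle : ∀ᶠ n in l, ∀ x, dist (F n x) (G x) ≤ dist (f n x) (g x)) :
    TendstoInMeasure μ F l G := by
  rw [tendstoInMeasure_iff_dist] at hf ⊢
  intro ε hε
  refine tendsto_of_tendsto_of_tendsto_of_le_of_le' tendsto_const_nhds (hf ε hε)
    (.of_forall fun _ => zero_le) ?_
  filter_upwards [hle] with n hn
  exact measure_mono fun x hx => le_trans hx (hn x)

theorem tendstoInMeasure_const_of_tendsto_integral_of_tendsto_variance [IsFiniteMeasure μ]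
    {X : ι → α → ℝ} {c : ℝ} (hX : ∀ n, MemLp (X n) 2 μ)
    (hmean : Tendsto (fun n => μ[X n]) l (𝓝 c))
    (hvar : Tendsto (fun n => variance (X n) μ) l (𝓝 0)) :
    TendstoInMeasure μ X l fun _ => c := by
  rw [tendstoInMeasure_iff_dist]
  intro ε hε
  have hε2 : 0 < ε / 2 := half_pos hε
  have hbound : Tendsto (fun n => ENNReal.ofReal (variance (X n) μ / (ε / 2) ^ 2)) l (𝓝 0) := by
    simpa using ENNReal.tendsto_ofReal (hvar.div_const ((ε / 2) ^ 2))
  refine tendsto_of_tendsto_of_tendsto_of_le_of_le' tendsto_const_nhds hbound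
    (.of_forall fun _ => zero_le) ?_
  filter_upwards [hmean.eventually (Metric.ball_mem_nhds c hε2)] with n hn
  refine le_trans (measure_mono fun x (hx : ε ≤ dist (X n x) c) => ?_)
    (meas_ge_le_variance_div_sq (hX n) hε2)
  rw [Real.dist_eq] at hx hn
  show ε / 2 ≤ |X n x - μ[X n]|
  linarith [abs_sub_le (X n x) (μ[X n]) c]

end ConvergenceInMeasure

section Variance

variable {Ω ι : Type*} [MeasurableSpace Ω] {μ : Measure Ω}

theorem variance_average_le {Y : ι → Ω → ℝ} {s : Finset ι} {v : ℝ}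
    (hY : ∀ i ∈ s, MemLp (Y i) 2 μ) (hindep : Set.Pairwise ↑s fun i j => Y i ⟂ᵢ[μ] Y j)
    (hv : ∀ i ∈ s, variance (Y i) μ ≤ v) :
    variance (fun ω => (s.card : ℝ)⁻¹ * ∑ i ∈ s, Y i ω) μ ≤ v / s.card := by
  have hsum : variance (∑ i ∈ s, Y i) μ ≤ s.card * v := by
    rw [IndepFun.variance_sum hY hindep]
    simpa using Finset.sum_le_sum hv
  calc variance (fun ω => (s.card : ℝ)⁻¹ * ∑ i ∈ s, Y i ω) μ
      = (s.card : ℝ)⁻¹ ^ 2 * variance (∑ i ∈ s, Y i) μ := by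
        rw [← variance_const_mul]
        simp only [Finset.sum_apply]
    _ ≤ (s.card : ℝ)⁻¹ ^ 2 * (s.card * v) := by gcongr
    _ = v / s.card := by
        rcases eq_or_ne (s.card : ℝ) 0 with h | h
        · simp [h]
        · field_simp

end Variance

theorem tendsto_cdf_div_of_tendsto_nhdsGT_zero {ι : Type*} (μ : Measure ℝ) {l : Filter ι}
    {φ : ι → ℝ} (hφ : Tendsto φ l (𝓝[>] 0)) {u : ℝ} (hu : u ≠ 0) :
    Tendsto (fun n => cdf μ (u / φ n)) l (𝓝 (if 0 < u then 1 else 0)) := by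
  have hinv : Tendsto (fun n => (φ n)⁻¹) l atTop := tendsto_inv_nhdsGT_zero.comp hφ
  simp only [div_eq_mul_inv]
  rcases hu.lt_or_gt with hneg | hpos
  · rw [if_neg (not_lt.2 hneg.le)]
    exact (tendsto_cdf_atBot μ).comp ((tendsto_const_mul_atBot_of_neg hneg).2 hinv)
  · rw [if_pos hpos]
    exact (tendsto_cdf_atTop μ).comp (hinv.const_mul_atTop hpos)

section ThresholdIndicator

variable {Ω : Type*} [MeasurableSpace Ω] {P : Measure Ω} {X : Ω → ℝ}

theorem measurable_ite_le (t : ℝ) : Measurable fun x : ℝ => if x ≤ t then (1 : ℝ) else 0 :=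
  Measurable.ite measurableSet_Iic measurable_const measurable_const

theorem ite_le_mem_Icc (x t : ℝ) : (if x ≤ t then (1 : ℝ) else 0) ∈ Icc 0 1 := by
  split_ifs <;> norm_num

theorem memLp_ite_le [IsFiniteMeasure P] (hX : Measurable X) (t : ℝ) (p : ENNReal) :
    MemLp (fun ω => if X ω ≤ t then (1 : ℝ) else 0) p P := by
  refine MemLp.of_bound ((measurable_ite_le t).comp hX).aestronglyMeasurable 1
    (.of_forall fun ω => ?_)
  have h := ite_le_mem_Icc (X ω) t
  rw [Real.norm_of_nonneg h.1]
  exact h.2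

theorem integral_ite_le_eq_cdf [IsProbabilityMeasure P] (hX : Measurable X) (t : ℝ) :
    ∫ ω, (if X ω ≤ t then (1 : ℝ) else 0) ∂P = cdf (P.map X) t := by
  have := Measure.isProbabilityMeasure_map (μ := P) hX.aemeasurable
  have hind : (fun x : ℝ => if x ≤ t then (1 : ℝ) else 0) = (Iic t).indicator 1 := by
    ext x
    simp [indicator_apply]
  rw [← integral_map hX.aemeasurable (measurable_ite_le t).aestronglyMeasurable, hind,
    integral_indicator_one measurableSet_Iic, cdf_eq_real]

theorem variance_ite_le_le [IsProbabilityMeasure P] (hX : Measurable X) (t : ℝ) :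
    variance (fun ω => if X ω ≤ t then (1 : ℝ) else 0) P ≤ 1 / 4 := by
  have h := variance_le_sq_of_bounded (.of_forall fun ω => ite_le_mem_Icc (X ω) t)
    ((measurable_ite_le t).comp hX).aemeasurable (μ := P)
  norm_num at h
  exact h

end ThresholdIndicator

theorem dist_sq_sub_half_le {x y : ℝ} (hx : x ∈ Icc 0 1) (hy : y ∈ Icc 0 1) :
    dist ((x - 1 / 2) ^ 2) ((y - 1 / 2) ^ 2) ≤ dist x y := by
  have hfac : (x - 1 / 2) ^ 2 - (y - 1 / 2) ^ 2 = (x - y) * (x + y - 1) := by ring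
  have hbound : |x + y - 1| ≤ 1 := abs_le.2 ⟨by linarith [hx.1, hy.1], by linarith [hx.2, hy.2]⟩
  rw [Real.dist_eq, Real.dist_eq, hfac, abs_mul]
  exact mul_le_of_le_one_right (abs_nonneg _) hbound

theorem inv_mul_sq_inv_sqrt_mul_sum_sub_half {M : ℕ} (hM : M ≠ 0) (a : ℕ → ℝ) :
    (M : ℝ)⁻¹ * ((1 / Real.sqrt M) * ∑ i ∈ Finset.Icc 1 M, (a i - 1 / 2)) ^ 2
      = ((M : ℝ)⁻¹ * ∑ i ∈ Finset.Icc 1 M, a i - 1 / 2) ^ 2 := by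
  have hM' : (M : ℝ) ≠ 0 := Nat.cast_ne_zero.2 hM
  rw [Finset.sum_sub_distrib, Finset.sum_const, Nat.card_Icc, Nat.add_sub_cancel, nsmul_eq_mul,
    mul_pow, div_pow, Real.sq_sqrt M.cast_nonneg]
  field_simp

noncomputable def empiricalCdf {Ω : Type*} (ξ : ℕ → Ω → ℝ) (M : ℕ) (t : ℝ) (ω : Ω) : ℝ :=
  (M : ℝ)⁻¹ * ∑ i ∈ Finset.Icc 1 M, if ξ i ω ≤ t then 1 else 0

namespace empiricalCdf

theorem mem_Icc {Ω : Type*} (ξ : ℕ → Ω → ℝ) (M : ℕ) (t : ℝ) (ω : Ω) :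
    empiricalCdf ξ M t ω ∈ Icc 0 1 := by
  have hsum : ∑ i ∈ Finset.Icc 1 M, (if ξ i ω ≤ t then (1 : ℝ) else 0) ≤ M := by
    calc _ ≤ ∑ _i ∈ Finset.Icc 1 M, (1 : ℝ) :=
          Finset.sum_le_sum fun i _ => (ite_le_mem_Icc (ξ i ω) t).2
      _ = M := by simp
  refine ⟨mul_nonneg (by positivity)
    (Finset.sum_nonneg fun i _ => (ite_le_mem_Icc (ξ i ω) t).1), ?_⟩
  rcases Nat.eq_zero_or_pos M with rfl | hM
  · simp [empiricalCdf]
  · exact (inv_mul_le_one₀ (by positivity)).2 hsum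

variable {Ω : Type*} [MeasurableSpace Ω] {P : Measure Ω} {ξ : ℕ → Ω → ℝ}

theorem measurable (hmeas : ∀ i, Measurable (ξ i)) (M : ℕ) (t : ℝ) :
    Measurable (empiricalCdf ξ M t) :=
  (Finset.measurable_sum _ fun i _ => (measurable_ite_le t).comp (hmeas i)).const_mul _

theorem integral_eq_cdf [IsProbabilityMeasure P] (hmeas : ∀ i, Measurable (ξ i)) {μ : Measure ℝ}
    (hlaw : ∀ i, 1 ≤ i → P.map (ξ i) = μ) {M : ℕ} (hM : M ≠ 0) (t : ℝ) :
    P[empiricalCdf ξ M t] = cdf μ t := by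
  have hM' : (M : ℝ) ≠ 0 := Nat.cast_ne_zero.2 hM
  have hterm : ∀ i ∈ Finset.Icc 1 M, ∫ ω, (if ξ i ω ≤ t then (1 : ℝ) else 0) ∂P = cdf μ t :=
    fun i hi => by rw [integral_ite_le_eq_cdf (hmeas i), hlaw i (Finset.mem_Icc.1 hi).1]
  unfold empiricalCdf
  rw [integral_const_mul,
    integral_finsetSum _ fun i _ => (memLp_ite_le (hmeas i) t 1).integrable le_rfl,
    Finset.sum_congr rfl hterm, Finset.sum_const, Nat.card_Icc, Nat.add_sub_cancel, nsmul_eq_mul,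
    inv_mul_cancel_left₀ hM']

theorem variance_le [IsProbabilityMeasure P] (hmeas : ∀ i, Measurable (ξ i))
    (hindep : ∀ i j, 1 ≤ i → 1 ≤ j → i ≠ j → ξ i ⟂ᵢ[P] ξ j) (M : ℕ) (t : ℝ) :
    variance (empiricalCdf ξ M t) P ≤ (M : ℝ)⁻¹ / 4 := by
  have h := variance_average_le (μ := P) (s := Finset.Icc 1 M)
    (fun i _ => memLp_ite_le (hmeas i) t 2)
    (fun i hi j hj hij => (hindep i j (Finset.mem_Icc.1 hi).1 (Finset.mem_Icc.1 hj).1 hij).comp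
      (measurable_ite_le t) (measurable_ite_le t))
    (fun i _ => variance_ite_le_le (hmeas i) t)
  rw [Nat.card_Icc, Nat.add_sub_cancel] at h
  exact h.trans_eq (by ring)

theorem tendstoInMeasure [IsProbabilityMeasure P] (hmeas : ∀ i, Measurable (ξ i))
    (hindep : ∀ i j, 1 ≤ i → 1 ≤ j → i ≠ j → ξ i ⟂ᵢ[P] ξ j) {μ : Measure ℝ}
    (hlaw : ∀ i, 1 ≤ i → P.map (ξ i) = μ) {t : ℕ → ℝ} {p : ℝ}
    (ht : Tendsto (fun M => cdf μ (t M)) atTop (𝓝 p)) :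
    TendstoInMeasure P (fun M => empiricalCdf ξ M (t M)) atTop fun _ => p := by
  refine tendstoInMeasure_const_of_tendsto_integral_of_tendsto_variance
    (fun M => MemLp.of_bound (measurable hmeas M (t M)).aestronglyMeasurable 1
      (.of_forall fun ω => ?_)) ?_ ?_
  · have h := mem_Icc ξ M (t M) ω
    rw [Real.norm_of_nonneg h.1]
    exact h.2
  · refine ht.congr' ?_
    filter_upwards [eventually_ne_atTop 0] with M hM
    exact (integral_eq_cdf hmeas hlaw hM (t M)).symm
  · refine squeeze_zero (fun M => variance_nonneg _ _)
      (fun M => variance_le hmeas hindep M (t M)) ?_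
    simpa using (tendsto_inv_atTop_zero.comp tendsto_natCast_atTop_atTop).div_const (4 : ℝ)

end empiricalCdf

theorem iIndepFun.indepFun_of_succ {Ω β : Type*} [MeasurableSpace Ω] [MeasurableSpace β]
    {P : Measure Ω} {ξ : ℕ → Ω → β} (h : iIndepFun (fun n => ξ (n + 1)) P) {i j : ℕ}
    (hi : 1 ≤ i) (hj : 1 ≤ j) (hij : i ≠ j) : ξ i ⟂ᵢ[P] ξ j := by
  obtain ⟨i, rfl⟩ := Nat.exists_eq_add_of_le' hi
  obtain ⟨j, rfl⟩ := Nat.exists_eq_add_of_le' hj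
  exact h.indepFun (by omega)

/-- **Behaviour of the randomised statistic under the alternative.**  Let `(ξ_i)_{i ≥ 1}` be
i.i.d. standard Gaussian random variables and `(φ_M)_{M ≥ 1}` positive reals with `φ_M → 0`.
Then for every real `u ≠ 0`, the random variables
`M⁻¹ (M^{-1/2} ∑_{i=1}^M (1{ξ_i ≤ u/φ_M} − 1/2))²` converge in probability to `1/4`. -/
theorem randomised_statistic_alternative_limit {Ω : Type*} [MeasurableSpace Ω]
    (P : Measure Ω) [IsProbabilityMeasure P]
    (ξ : ℕ → Ω → ℝ) (hmeas : ∀ i, Measurable (ξ i))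
    (hindep : iIndepFun (fun n => ξ (n + 1)) P)
    (hlaw : ∀ i, 1 ≤ i → P.map (ξ i) = gaussianReal 0 1)
    (φ : ℕ → ℝ) (hφpos : ∀ M, 0 < φ M) (hφ0 : Tendsto φ atTop (nhds 0))
    (u : ℝ) (hu : u ≠ 0) :
    TendstoInMeasure P
      (fun (M : ℕ) ω => ((M : ℝ))⁻¹ *
        ((1 / Real.sqrt M) *
          ∑ i ∈ Finset.Icc 1 M, ((if ξ i ω ≤ u / φ M then (1 : ℝ) else 0) - 1 / 2)) ^ 2)
      atTop (fun _ => 1 / 4) := by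
  set p : ℝ := if 0 < u then 1 else 0
  have hφ : Tendsto φ atTop (𝓝[>] 0) :=
    tendsto_nhdsWithin_of_tendsto_nhds_of_eventually_within _ hφ0 (.of_forall hφpos)
  have hF : TendstoInMeasure P (fun M => empiricalCdf ξ M (u / φ M)) atTop fun _ => p :=
    empiricalCdf.tendstoInMeasure hmeas (fun _ _ => iIndepFun.indepFun_of_succ hindep) hlaw
      (tendsto_cdf_div_of_tendsto_nhdsGT_zero _ hφ hu)
  have hp : p ∈ Icc 0 1 := by unfold p; split_ifs <;> norm_num
  have hquarter : (p - 1 / 2) ^ 2 = 1 / 4 := by unfold p; split_ifs <;> norm_num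
  refine TendstoInMeasure.of_eventually_dist_le hF ?_
  filter_upwards [eventually_ne_atTop 0] with M hM ω
  rw [inv_mul_sq_inv_sqrt_mul_sum_sub_half hM, ← hquarter]
  exact dist_sq_sub_half_le (empiricalCdf.mem_Icc ξ M _ ω) hp
end
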